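/- arXiv:2102.13239 — 10 statements merged into one kernel-verified Lean document; each statement's English description precedes it below -/
import Mathlib

section
/- For every fusion ring with structure constants N_{ijm} and Frobenius–Perron dimensions d_i, for all i₁, i₂, i₃, i₄ ∈ I and any two distinct indices p, q ∈ {1,2,3,4}, one has Σ_{m∈I} N_{i₁i₂m} · N_{i₃i₄m} ≤ d_{i_p} · d_{i_q}. -/
open scoped BigOperators

/-- A fusion ring datum: finite index set `I`, unit index `zero`, duality involution `dual`,
and structure constants `N` satisfying associativity, unit, duality and symmetry axioms. -/
structure FusionData (I : Type*) [Fintype I] [DecidableEq I] where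
  zero : I
  dual : I → I
  N : I → I → I → ℕ
  dual_dual : ∀ i, dual (dual i) = i
  dual_zero : dual zero = zero
  assoc : ∀ i j k l, ∑ m, N i j m * N m k l = ∑ m, N j k m * N i m l
  unit_left : ∀ j m, N zero j m = if j = m then 1 else 0
  unit_right : ∀ i m, N i zero m = if i = m then 1 else 0
  duality : ∀ i j, N i j zero = if j = dual i then 1 else 0
  sym1 : ∀ i j m, N i j m = N j (dual m) (dual i)
  sym2 : ∀ i j m, N i j m = N (dual m) i (dual j)
  sym3 : ∀ i j m, N i j m = N (dual j) (dual i) (dual m)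

/-- A family `d : I → ℝ` of Frobenius–Perron dimensions for a fusion datum. -/
structure FusionData.IsFPdim {I : Type*} [Fintype I] [DecidableEq I]
    (F : FusionData I) (d : I → ℝ) : Prop where
  pos : ∀ i, 0 < d i
  one : d F.zero = 1
  dual : ∀ i, d (F.dual i) = d i
  mul : ∀ i j, d i * d j = ∑ m, (F.N i j m : ℝ) * d m

section Aux

variable {I : Type*} [Fintype I] [DecidableEq I] (F : FusionData I) (d : I → ℝ)
  (hd : F.IsFPdim d)

/-- `N a b m = N m b* a`. -/
lemma FD_rot1 (a b m : I) : F.N a b m = F.N m (F.dual b) a := by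
  rw [F.sym1 a b m, F.sym3, F.dual_dual, F.dual_dual]

/-- `N a b m = N a* m b`. -/
lemma FD_rot2 (a b m : I) : F.N a b m = F.N (F.dual a) m b := by
  rw [F.sym3 a b m, F.sym1, F.dual_dual, F.dual_dual]

include hd

lemma FD_one_le : ∀ j, 1 ≤ d j := by
  intro j
  have h := hd.mul j (F.dual j)
  rw [hd.dual] at h
  have h1 : (1 : ℝ) ≤ ∑ m, (F.N j (F.dual j) m : ℝ) * d m := by
    have hterm : (F.N j (F.dual j) F.zero : ℝ) * d F.zero = 1 := by
      rw [F.duality, hd.one]; simp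
    calc (1 : ℝ) = (F.N j (F.dual j) F.zero : ℝ) * d F.zero := hterm.symm
      _ ≤ ∑ m, (F.N j (F.dual j) m : ℝ) * d m :=
        Finset.single_le_sum (f := fun m => (F.N j (F.dual j) m : ℝ) * d m)
          (fun m _ => mul_nonneg (Nat.cast_nonneg _) (hd.pos m).le) (Finset.mem_univ _)
  nlinarith [hd.pos j]

lemma FD_term_le (a b c : I) : (F.N a b c : ℝ) * d c ≤ d a * d b := by
  rw [hd.mul]
  exact Finset.single_le_sum (fun m _ => mul_nonneg (Nat.cast_nonneg _) (hd.pos m).le)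
    (Finset.mem_univ c)

/-- A single structure constant is at most the FP-dimension of its third index. -/
lemma FD_N_le (a b c : I) : (F.N a b c : ℝ) ≤ d c := by
  have h1 : (F.N a b c : ℝ) * d a ≤ d b * d c := by
    have := FD_term_le F d hd b (F.dual c) (F.dual a)
    rw [← F.sym1, hd.dual, hd.dual] at this
    linarith
  have h2 : (F.N a b c : ℝ) * d b ≤ d c * d a := by
    have := FD_term_le F d hd (F.dual c) a (F.dual b)
    rw [← F.sym2, hd.dual, hd.dual] at this
    linarith
  have h3 : ((F.N a b c : ℝ) * d a) * ((F.N a b c : ℝ) * d b) ≤ (d b * d c) * (d c * d a) :=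
    mul_le_mul h1 h2 (mul_nonneg (Nat.cast_nonneg _) (hd.pos b).le)
      (mul_nonneg (hd.pos b).le (hd.pos c).le)
  have hN : (0:ℝ) ≤ (F.N a b c : ℝ) := Nat.cast_nonneg _
  nlinarith [hd.pos a, hd.pos b, hd.pos c]

/-- Direct pair bound. -/
lemma FD_pair (a b c e : I) :
    ∑ m, (F.N a b m : ℝ) * (F.N c e m : ℝ) ≤ d a * d b := by
  rw [hd.mul]
  refine Finset.sum_le_sum fun m _ => ?_
  exact mul_le_mul_of_nonneg_left (FD_N_le F d hd c e m) (Nat.cast_nonneg _)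

/-- Self pair bound: `∑ m, N a b m ^ 2 ≤ d a ^ 2`. -/
lemma FD_sumsq (a b : I) : ∑ m, ((F.N a b m : ℝ)) ^ 2 ≤ d a ^ 2 := by
  have key : ∑ m, (F.N a b m) * (F.N a b m) = ∑ m, (F.N b (F.dual b) m) * (F.N a m a) := by
    calc ∑ m, (F.N a b m) * (F.N a b m)
        = ∑ m, (F.N a b m) * (F.N m (F.dual b) a) := by
          refine Finset.sum_congr rfl fun m _ => ?_
          rw [← FD_rot1]
      _ = ∑ m, (F.N b (F.dual b) m) * (F.N a m a) := F.assoc a b (F.dual b) a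
  have keyR : ∑ m, ((F.N a b m : ℝ)) ^ 2
      = ∑ m, (F.N b (F.dual b) m : ℝ) * (F.N a m a : ℝ) := by
    have := congrArg (fun n : ℕ => (n : ℝ)) key
    push_cast at this
    simpa [sq] using this
  rw [keyR]
  have hle : ∑ m, (F.N b (F.dual b) m : ℝ) * (F.N a m a : ℝ)
      ≤ ∑ m, (F.N (F.dual a) a m : ℝ) * d m := by
    refine Finset.sum_le_sum fun m _ => ?_
    have h1 : (F.N b (F.dual b) m : ℝ) ≤ d m := FD_N_le F d hd _ _ _
    have h2 : (F.N a m a : ℝ) = (F.N (F.dual a) a m : ℝ) := by rw [← FD_rot2]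
    rw [mul_comm, h2]
    exact mul_le_mul_of_nonneg_left h1 (Nat.cast_nonneg _)
  calc _ ≤ ∑ m, (F.N (F.dual a) a m : ℝ) * d m := hle
    _ = d (F.dual a) * d a := (hd.mul _ _).symm
    _ = d a ^ 2 := by rw [hd.dual]; ring

/-- Self pair bound, second index. -/
lemma FD_sumsq' (a b : I) : ∑ m, ((F.N a b m : ℝ)) ^ 2 ≤ d b ^ 2 := by
  have hre : ∑ m, ((F.N a b m : ℝ)) ^ 2
      = ∑ m, ((F.N (F.dual b) (F.dual a) m : ℝ)) ^ 2 := by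
    refine Fintype.sum_bijective F.dual (Function.Involutive.bijective F.dual_dual) _ _
      (fun m => ?_)
    rw [F.sym3 a b m]
  rw [hre]
  have := FD_sumsq F d hd (F.dual b) (F.dual a)
  rwa [hd.dual] at this

/-- Cauchy–Schwarz step. -/
lemma FD_cs (a b c e : I) (x y : ℝ)
    (hx : ∑ m, ((F.N a b m : ℝ)) ^ 2 ≤ x ^ 2) (hy : ∑ m, ((F.N c e m : ℝ)) ^ 2 ≤ y ^ 2)
    (hx0 : 0 ≤ x) (hy0 : 0 ≤ y) :
    ∑ m, (F.N a b m : ℝ) * (F.N c e m : ℝ) ≤ x * y := by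
  have hcs := Finset.sum_mul_sq_le_sq_mul_sq Finset.univ
    (fun m => (F.N a b m : ℝ)) (fun m => (F.N c e m : ℝ))
  have hT : 0 ≤ ∑ m, (F.N a b m : ℝ) * (F.N c e m : ℝ) :=
    Finset.sum_nonneg fun m _ => mul_nonneg (Nat.cast_nonneg _) (Nat.cast_nonneg _)
  have hB : 0 ≤ ∑ m, ((F.N c e m : ℝ)) ^ 2 := Finset.sum_nonneg fun m _ => sq_nonneg _
  have hAB : (∑ m, ((F.N a b m : ℝ)) ^ 2) * (∑ m, ((F.N c e m : ℝ)) ^ 2) ≤ x ^ 2 * y ^ 2 :=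
    mul_le_mul hx hy hB (sq_nonneg x)
  have hT2 : (∑ m, (F.N a b m : ℝ) * (F.N c e m : ℝ)) ^ 2 ≤ (x * y) ^ 2 := by
    calc (∑ m, (F.N a b m : ℝ) * (F.N c e m : ℝ)) ^ 2
        ≤ (∑ m, ((F.N a b m : ℝ)) ^ 2) * (∑ m, ((F.N c e m : ℝ)) ^ 2) := hcs
      _ ≤ x ^ 2 * y ^ 2 := hAB
      _ = (x * y) ^ 2 := by ring
  exact le_of_pow_le_pow_left₀ two_ne_zero (mul_nonneg hx0 hy0) hT2

end Aux

/-- For every fusion ring, indices `i₁ i₂ i₃ i₄` and any two distinct `p q ∈ {1,2,3,4}`,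
`∑ m, N i₁ i₂ m * N i₃ i₄ m ≤ d (i p) * d (i q)`. -/
theorem sum_fusion_coeff_mul_le {I : Type*} [Fintype I] [DecidableEq I]
    (F : FusionData I) (d : I → ℝ) (hd : F.IsFPdim d) (i : Fin 4 → I)
    (p q : Fin 4) (hpq : p ≠ q) :
    ∑ m, (F.N (i 0) (i 1) m : ℝ) * (F.N (i 2) (i 3) m : ℝ) ≤ d (i p) * d (i q) := by
  have hswap : ∑ m, (F.N (i 0) (i 1) m : ℝ) * (F.N (i 2) (i 3) m : ℝ)
      = ∑ m, (F.N (i 2) (i 3) m : ℝ) * (F.N (i 0) (i 1) m : ℝ) := by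
    simp [mul_comm]
  have h01 := FD_pair F d hd (i 0) (i 1) (i 2) (i 3)
  have h23 : ∑ m, (F.N (i 0) (i 1) m : ℝ) * (F.N (i 2) (i 3) m : ℝ) ≤ d (i 2) * d (i 3) := by
    rw [hswap]; exact FD_pair F d hd (i 2) (i 3) (i 0) (i 1)
  have cs : ∀ p' q', (p' = 0 ∨ p' = 1) → (q' = 2 ∨ q' = 3) →
      ∑ m, (F.N (i 0) (i 1) m : ℝ) * (F.N (i 2) (i 3) m : ℝ) ≤ d (i p') * d (i q') := by
    intro p' q' hp hq
    refine FD_cs F d hd _ _ _ _ _ _ ?_ ?_ (hd.pos _).le (hd.pos _).le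
    · rcases hp with h | h <;> subst h
      · exact FD_sumsq F d hd _ _
      · exact FD_sumsq' F d hd _ _
    · rcases hq with h | h <;> subst h
      · exact FD_sumsq F d hd _ _
      · exact FD_sumsq' F d hd _ _
  fin_cases p <;> fin_cases q <;> simp_all <;>
    first
      | exact h01
      | exact h23
      | (rw [mul_comm]; exact h01)
      | (rw [mul_comm]; exact h23)
      | exact cs 0 2 (Or.inl rfl) (Or.inl rfl)
      | exact cs 0 3 (Or.inl rfl) (Or.inr rfl)
      | exact cs 1 2 (Or.inr rfl) (Or.inl rfl)
      | exact cs 1 3 (Or.inr rfl) (Or.inr rfl)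
      | (rw [mul_comm]; exact cs 0 2 (Or.inl rfl) (Or.inl rfl))
      | (rw [mul_comm]; exact cs 0 3 (Or.inl rfl) (Or.inr rfl))
      | (rw [mul_comm]; exact cs 1 2 (Or.inr rfl) (Or.inl rfl))
      | (rw [mul_comm]; exact cs 1 3 (Or.inr rfl) (Or.inr rfl))
end

section
/- Let ρ : A_ℂ → End(V) be a finite-dimensional irreducible representation of the complexified fusion ring A_ℂ with formal codegree α_ρ (so ρ(z_ρ) = α_ρ·id_V). Then for all a₁, a₂ ∈ A_ℂ: Σ_{i∈I} Tr(ρ(a₁ b_i)) · Tr(ρ(b_{i*} a₂)) = α_ρ · Tr(ρ(a₁ a₂)). -/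
open scoped BigOperators

/-!
For every linear functional `T` on a based ring, `∑ i, T (a * b i) • b i*` equals
`(∑ i, T (b i) • b i*) * a`: on basis elements this is the symmetry `N j i m = N m* j i*` of the
structure constants. Taking `T = Tr ∘ ρ`, the element `∑ i, T (b i) • b i*` is `z_ρ`, which acts
by `α`, and applying `T (· * a₂)` gives the identity.
-/

namespace FusionData

variable {I : Type*} [Fintype I] [DecidableEq I] (F : FusionData I)
  {R A : Type*} [CommSemiring R] [Semiring A] [Algebra R A] (b : Module.Basis I R A)

theorem sum_apply_basis_mul_smul_basis_dual
    (hbmul : ∀ i j, b i * b j = ∑ m, (F.N i j m : R) • b m) (T : A →ₗ[R] R) (j : I) :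
    ∑ i, T (b j * b i) • b (F.dual i) = (∑ i, T (b i) • b (F.dual i)) * b j := by
  calc ∑ i, T (b j * b i) • b (F.dual i)
      = ∑ i, ∑ m, ((F.N j i m : R) * T (b m)) • b (F.dual i) := by
        simp only [hbmul, map_sum, map_smul, smul_eq_mul, Finset.sum_smul]
    _ = ∑ k, ∑ m, ((F.N (F.dual m) j k : R) * T (b m)) • b k := by
        refine Fintype.sum_equiv (Function.Involutive.toPerm _ F.dual_dual) _ _ fun i =>
          Finset.sum_congr rfl fun m _ => ?_
        rw [F.sym2 j i m]; rfl
    _ = (∑ i, T (b i) • b (F.dual i)) * b j := by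
        rw [Finset.sum_comm, Finset.sum_mul]
        simp only [smul_mul_assoc, hbmul, Finset.smul_sum, smul_smul, mul_comm]

theorem sum_apply_mul_smul_basis_dual
    (hbmul : ∀ i j, b i * b j = ∑ m, (F.N i j m : R) • b m) (T : A →ₗ[R] R) (a : A) :
    ∑ i, T (a * b i) • b (F.dual i) = (∑ i, T (b i) • b (F.dual i)) * a := by
  have h := b.ext (f₁ := ∑ i, (T ∘ₗ LinearMap.mulRight R (b i)).smulRight (b (F.dual i)))
    (f₂ := LinearMap.mulLeft R (∑ i, T (b i) • b (F.dual i)))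
    fun j => by simpa using F.sum_apply_basis_mul_smul_basis_dual b hbmul T j
  simpa using LinearMap.congr_fun h a

end FusionData

theorem trace_codegree_identity_general {I : Type*} [Fintype I] [DecidableEq I]
    (F : FusionData I)
    {A : Type*} [Ring A] [Algebra ℂ A] (b : Module.Basis I ℂ A)
    (hbmul : ∀ i j, b i * b j = ∑ m, (F.N i j m : ℂ) • b m)
    {V : Type*} [AddCommGroup V] [Module ℂ V]
    (ρ : A →ₐ[ℂ] Module.End ℂ V)
    (α : ℂ)
    (hα : ρ (∑ i, (LinearMap.trace ℂ V (ρ (b i))) • b (F.dual i))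
            = α • (1 : Module.End ℂ V))
    (a₁ a₂ : A) :
    ∑ i, (LinearMap.trace ℂ V (ρ (a₁ * b i))) * (LinearMap.trace ℂ V (ρ (b (F.dual i) * a₂)))
      = α * LinearMap.trace ℂ V (ρ (a₁ * a₂)) := by
  let T : A →ₗ[ℂ] ℂ := LinearMap.trace ℂ V ∘ₗ ρ.toLinearMap
  calc ∑ i, T (a₁ * b i) * T (b (F.dual i) * a₂)
      = T ((∑ i, T (a₁ * b i) • b (F.dual i)) * a₂) := by
        simp only [Finset.sum_mul, smul_mul_assoc, map_sum, map_smul, smul_eq_mul]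
    _ = T ((∑ i, T (b i) • b (F.dual i)) * (a₁ * a₂)) := by
        rw [F.sum_apply_mul_smul_basis_dual b hbmul, mul_assoc]
    _ = α * T (a₁ * a₂) := by
        simp only [T, LinearMap.comp_apply, AlgHom.toLinearMap_apply, map_mul, hα,
          smul_mul_assoc, one_mul, map_smul, smul_eq_mul]

/-- Lemma on traces: for an irreducible finite-dimensional representation `ρ` of the
complexified fusion ring `A` (given as a ℂ-algebra with basis `b i` satisfying the fusion
rules) whose formal codegree is `α` (i.e. `ρ (z_ρ) = α • 1`), one has
`∑ i, Tr(ρ (a₁ * b i)) * Tr(ρ (b i* * a₂)) = α * Tr(ρ (a₁ * a₂))`. -/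
theorem trace_codegree_identity {I : Type*} [Fintype I] [DecidableEq I]
    (F : FusionData I)
    {A : Type*} [Ring A] [Algebra ℂ A] (b : Module.Basis I ℂ A)
    (hb1 : b F.zero = 1)
    (hbmul : ∀ i j, b i * b j = ∑ m, (F.N i j m : ℂ) • b m)
    {V : Type*} [AddCommGroup V] [Module ℂ V] [FiniteDimensional ℂ V] [Nontrivial V]
    (ρ : A →ₐ[ℂ] Module.End ℂ V)
    (hirr : ∀ W : Submodule ℂ V, (∀ a : A, ∀ v ∈ W, ρ a v ∈ W) → W = ⊥ ∨ W = ⊤)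
    (α : ℂ)
    (hα : ρ (∑ i, (LinearMap.trace ℂ V (ρ (b i))) • b (F.dual i))
            = α • (1 : Module.End ℂ V))
    (a₁ a₂ : A) :
    ∑ i, (LinearMap.trace ℂ V (ρ (a₁ * b i))) * (LinearMap.trace ℂ V (ρ (b (F.dual i) * a₂)))
      = α * LinearMap.trace ℂ V (ρ (a₁ * a₂)) :=
  trace_codegree_identity_general F b hbmul ρ α hα a₁ a₂
end

section
/- Let ρ : A_ℂ → End(V) be a finite-dimensional irreducible representation of the complexified fusion ring A_ℂ with formal codegree α_ρ (so ρ(z_ρ) = α_ρ·id_V). Then for all v₁, v₂ ∈ V and all linear functionals f₁, f₂ ∈ V*: Σ_{i∈I} f₁(ρ(b_i)v₁) · f₂(ρ(b_{i*})v₂) = α_ρ · f₂(v₁) · f₁(v₂). -/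
open scoped BigOperators

/-!
Consider `Ψ X = ∑ i, Tr (ρ (b i) * X) • ρ (b i*)` on `End V` (`FusionData.codegreeOp`). The
fusion rule symmetry `N i j m = N j m* i*` makes `Ψ` commute with left multiplication by
`ρ (b j)`, hence by all of `ρ A`, and `Ψ 1 = ρ z_ρ = α`. By Burnside's theorem `ρ` is onto
`End V`, so `Ψ = α • id`. Evaluating `Ψ` at the rank-one operator `w ↦ f₁ w • v₁`, whose product
with `ρ (b i)` has trace `f₁ (ρ (b i) v₁)`, and pairing with `v₂` and `f₂` gives the identity.
-/

theorem Module.End.mul_smulRight {R M : Type*} [CommSemiring R] [AddCommMonoid M] [Module R M]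
    (T : Module.End R M) (f : M →ₗ[R] R) (v : M) : T * f.smulRight v = f.smulRight (T v) := by
  ext
  simp

section Burnside

variable {k A V : Type*} [Field k] [IsAlgClosed k] [Ring A] [Algebra k A]
  [AddCommGroup V] [Module k V] [FiniteDimensional k V]

theorem IsSimpleModule.exists_eq_smul_of_isAlgClosed [Module A V] [IsScalarTower k A V]
    [IsSimpleModule A V] (g : V →ₗ[A] V) : ∃ c : k, ∀ v, g v = c • v := by
  have := IsSimpleModule.nontrivial A V
  obtain ⟨c, hc⟩ := Module.End.exists_eigenvalue (g.restrictScalars k)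
  obtain ⟨v, hv⟩ := hc.exists_hasEigenvector
  have hzero : g - c • 1 = 0 := by
    refine ((g - c • 1).bijective_or_eq_zero).resolve_left fun hbij => hv.2 (hbij.injective ?_)
    simpa [sub_eq_zero] using hv.apply_eq_smul
  exact ⟨c, fun v => sub_eq_zero.mp (by simpa using LinearMap.congr_fun hzero v)⟩

/-- Burnside's theorem, from the Jacobson density theorem: by Schur's lemma every `k`-linear map
commutes with `Module.End A V`. -/
theorem IsSimpleModule.lsmul_surjective_of_isAlgClosed [Module A V] [IsScalarTower k A V]
    [IsSimpleModule A V] :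
    Function.Surjective (Algebra.lsmul k k V : A →ₐ[k] Module.End k V) := by
  classical
  intro f
  let f' : Module.End (Module.End A V) V :=
    { toFun := f
      map_add' := f.map_add
      map_smul' := fun g v => by
        obtain ⟨c, hc⟩ := IsSimpleModule.exists_eq_smul_of_isAlgClosed (k := k) g
        simp [Module.End.smul_def, hc] }
  let s := Module.finBasis k V
  obtain ⟨a, ha⟩ := jacobson_density f' (Finset.univ.image s)
  exact ⟨a, (s.ext fun i => ha _ (by simp)).symm⟩

theorem AlgHom.surjective_of_irreducible (ρ : A →ₐ[k] Module.End k V)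
    (hirr : ∀ W : Submodule k V, (∀ a : A, ∀ v ∈ W, ρ a v ∈ W) → W = ⊥ ∨ W = ⊤) :
    Function.Surjective ρ := by
  rcases subsingleton_or_nontrivial V with _ | _
  · exact fun f => ⟨0, Subsingleton.elim _ _⟩
  let : Module A V := Module.compHom V ρ.toRingHom
  have : IsScalarTower k A V := ⟨fun c a v => by
    show ρ (c • a) v = c • ρ a v
    simp⟩
  have : IsSimpleModule A V :=
    { eq_bot_or_eq_top := fun W =>
        (hirr (W.restrictScalars k) fun a v hv => W.smul_mem a hv).imp
          (Submodule.restrictScalars_eq_bot_iff k A V).mp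
          (Submodule.restrictScalars_eq_top_iff k A V).mp }
  exact IsSimpleModule.lsmul_surjective_of_isAlgClosed

end Burnside

namespace FusionData

variable {I : Type*} [Fintype I] [DecidableEq I] {k A V : Type*} [CommRing k] [Ring A]
  [Algebra k A] [AddCommGroup V] [Module k V]

noncomputable def codegreeOp (F : FusionData I) (b : I → A) (ρ : A →ₐ[k] Module.End k V) :
    Module.End k (Module.End k V) :=
  ∑ i, ((LinearMap.trace k V).comp (LinearMap.mulLeft k (ρ (b i)))).smulRight (ρ (b (F.dual i)))

variable {F : FusionData I} {ρ : A →ₐ[k] Module.End k V}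

theorem codegreeOp_apply (b : I → A) (X : Module.End k V) :
    F.codegreeOp b ρ X = ∑ i, LinearMap.trace k V (ρ (b i) * X) • ρ (b (F.dual i)) := by
  simp [codegreeOp]

theorem codegreeOp_one (b : I → A) :
    F.codegreeOp b ρ 1 = ρ (∑ i, LinearMap.trace k V (ρ (b i)) • b (F.dual i)) := by
  simp [codegreeOp_apply]

theorem codegreeOp_mul_left {b : I → A} (hbmul : ∀ i j, b i * b j = ∑ m, (F.N i j m : k) • b m)
    (j : I) (X : Module.End k V) :
    F.codegreeOp b ρ (ρ (b j) * X) = ρ (b j) * F.codegreeOp b ρ X := by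
  have hρ : ∀ i j, ρ (b i) * ρ (b j) = ∑ m, (F.N i j m : k) • ρ (b m) := fun i j => by
    simp [← map_mul, hbmul]
  set t : I → k := fun m => LinearMap.trace k V (ρ (b m) * X)
  calc F.codegreeOp b ρ (ρ (b j) * X)
      = ∑ i, ∑ m, (F.N i j m * t m) • ρ (b (F.dual i)) := by
        simp [codegreeOp_apply, ← mul_assoc, hρ, Finset.sum_mul, Finset.sum_smul, mul_smul, t]
    _ = ∑ m, ∑ i, (F.N j (F.dual m) (F.dual i) * t m) • ρ (b (F.dual i)) := by
        rw [Finset.sum_comm]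
        simp only [← F.sym1]
    _ = ∑ m, ∑ i, (F.N j (F.dual m) i * t m) • ρ (b i) :=
        Finset.sum_congr rfl fun m _ => Equiv.sum_comp (Function.Involutive.toPerm _ F.dual_dual)
          fun i => (F.N j (F.dual m) i * t m) • ρ (b i)
    _ = ρ (b j) * F.codegreeOp b ρ X := by
        simp [codegreeOp_apply, Finset.mul_sum, hρ, Finset.smul_sum, mul_comm _ (t _), mul_smul, t]

theorem codegreeOp_mul (b : Module.Basis I k A)
    (hbmul : ∀ i j, b i * b j = ∑ m, (F.N i j m : k) • b m) (a : A) (X : Module.End k V) :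
    F.codegreeOp b ρ (ρ a * X) = ρ a * F.codegreeOp b ρ X := by
  have h := b.ext (f₁ := F.codegreeOp b ρ ∘ₗ LinearMap.mulRight k X ∘ₗ ρ.toLinearMap)
    (f₂ := LinearMap.mulRight k (F.codegreeOp b ρ X) ∘ₗ ρ.toLinearMap)
    fun j => codegreeOp_mul_left hbmul j X
  exact LinearMap.congr_fun h a

theorem codegreeOp_eq_smul (b : Module.Basis I k A)
    (hbmul : ∀ i j, b i * b j = ∑ m, (F.N i j m : k) • b m) (hρ : Function.Surjective ρ)
    {α : k} (hα : ρ (∑ i, LinearMap.trace k V (ρ (b i)) • b (F.dual i)) = α • 1)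
    (X : Module.End k V) : F.codegreeOp b ρ X = α • X := by
  obtain ⟨a, rfl⟩ := hρ X
  rw [← mul_one (ρ a), codegreeOp_mul b hbmul, codegreeOp_one, hα, mul_smul_comm]

end FusionData

theorem matrix_element_codegree_identity_general {I : Type*} [Fintype I] [DecidableEq I]
    (F : FusionData I)
    {A : Type*} [Ring A] [Algebra ℂ A] (b : Module.Basis I ℂ A)
    (hbmul : ∀ i j, b i * b j = ∑ m, (F.N i j m : ℂ) • b m)
    {V : Type*} [AddCommGroup V] [Module ℂ V] [FiniteDimensional ℂ V]
    (ρ : A →ₐ[ℂ] Module.End ℂ V)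
    (hirr : ∀ W : Submodule ℂ V, (∀ a : A, ∀ v ∈ W, ρ a v ∈ W) → W = ⊥ ∨ W = ⊤)
    (α : ℂ)
    (hα : ρ (∑ i, (LinearMap.trace ℂ V (ρ (b i))) • b (F.dual i))
            = α • (1 : Module.End ℂ V))
    (v₁ v₂ : V) (f₁ f₂ : V →ₗ[ℂ] ℂ) :
    ∑ i, f₁ (ρ (b i) v₁) * f₂ (ρ (b (F.dual i)) v₂) = α * f₂ v₁ * f₁ v₂ := by
  have hΨ := FusionData.codegreeOp_eq_smul b hbmul (ρ.surjective_of_irreducible hirr) hα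
    (f₁.smulRight v₁)
  calc ∑ i, f₁ (ρ (b i) v₁) * f₂ (ρ (b (F.dual i)) v₂)
      = f₂ (F.codegreeOp b ρ (f₁.smulRight v₁) v₂) := by
        simp [FusionData.codegreeOp_apply, Module.End.mul_smulRight, LinearMap.trace_smulRight]
    _ = α * f₂ v₁ * f₁ v₂ := by
        rw [hΨ]
        simp only [LinearMap.smul_apply, LinearMap.coe_smulRight, map_smul, smul_eq_mul]
        ring

/-- Matrix-element form of the codegree lemma: for an irreducible finite-dimensional
representation `ρ` of the complexified fusion ring with formal codegree `α`, vectors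
`v₁ v₂` and functionals `f₁ f₂`:
`∑ i, f₁ (ρ (b i) v₁) * f₂ (ρ (b i*) v₂) = α * f₂ v₁ * f₁ v₂`. -/
theorem matrix_element_codegree_identity {I : Type*} [Fintype I] [DecidableEq I]
    (F : FusionData I)
    {A : Type*} [Ring A] [Algebra ℂ A] (b : Module.Basis I ℂ A)
    (hb1 : b F.zero = 1)
    (hbmul : ∀ i j, b i * b j = ∑ m, (F.N i j m : ℂ) • b m)
    {V : Type*} [AddCommGroup V] [Module ℂ V] [FiniteDimensional ℂ V] [Nontrivial V]
    (ρ : A →ₐ[ℂ] Module.End ℂ V)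
    (hirr : ∀ W : Submodule ℂ V, (∀ a : A, ∀ v ∈ W, ρ a v ∈ W) → W = ⊥ ∨ W = ⊤)
    (α : ℂ)
    (hα : ρ (∑ i, (LinearMap.trace ℂ V (ρ (b i))) • b (F.dual i))
            = α • (1 : Module.End ℂ V))
    (v₁ v₂ : V) (f₁ f₂ : V →ₗ[ℂ] ℂ) :
    ∑ i, f₁ (ρ (b i) v₁) * f₂ (ρ (b (F.dual i)) v₂) = α * f₂ v₁ * f₁ v₂ :=
  matrix_element_codegree_identity_general F b hbmul ρ hirr α hα v₁ v₂ f₁ f₂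
end

section
/- Suppose A_ℂ is semisimple with a complete set {(V_ρ, ρ)} of pairwise non-isomorphic finite-dimensional irreducible representations, such that for each ρ the central element z_ρ acts on V_ρ by a nonzero scalar α_ρ and acts by 0 on every V_η with η not isomorphic to ρ. Then for every a ∈ A_ℂ one has τ(a) = Σ_ρ α_ρ^{-1} · Tr(ρ(a)), the sum over the isomorphism classes of irreducible representations. -/
/-!
The elements `z s = ∑ᵢ Tr(ρ_s(bᵢ)) b_{i*}` rescaled by `α_s⁻¹` act as the identity in every
representation, so by faithfulness `∑ₛ α_s⁻¹ z_s = 1`. Reading off the coefficient of `b_{i*}` on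
both sides gives `∑ₛ α_s⁻¹ Tr(ρ_s(bᵢ)) = δ_{i,0} = τ(bᵢ)`, and both sides of the claim are linear.
-/

open scoped BigOperators

theorem sum_inv_smul_eq_one_of_separating {K A S : Type*} [Field K] [Semiring A] [Algebra K A]
    [Fintype S] {B : S → Type*} [∀ s, Semiring (B s)] [∀ s, Algebra K (B s)]
    (ρ : ∀ s, A →ₐ[K] B s) (hρ : Function.Injective fun a s => ρ s a)
    (z : S → A) (α : S → K) (hα0 : ∀ s, α s ≠ 0)
    (hα : ∀ s, ρ s (z s) = α s • 1) (hz0 : ∀ s t, s ≠ t → ρ t (z s) = 0) :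
    ∑ s, (α s)⁻¹ • z s = 1 := by
  refine hρ (funext fun t => ?_)
  dsimp only
  rw [map_one, map_sum, Finset.sum_eq_single_of_mem t (Finset.mem_univ t)
    fun s _ hst => by rw [map_smul, hz0 s t hst, smul_zero]]
  rw [map_smul, hα, smul_smul, inv_mul_cancel₀ (hα0 t), one_smul]

theorem Module.Basis.repr_sum_smul_perm_apply {ι R M : Type*} [Fintype ι] [Semiring R]
    [AddCommMonoid M] [Module R M] (b : Module.Basis ι R M) (σ : Equiv.Perm ι) (c : ι → R)
    (j : ι) : b.repr (∑ i, c i • b (σ i)) (σ j) = c j := by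
  simpa only [Module.Basis.reindex_apply, Module.Basis.repr_reindex_apply, Equiv.symm_symm]
    using congr_fun ((b.reindex σ.symm).repr_sum_self c) j

namespace FusionData

variable {I : Type*} [Fintype I] [DecidableEq I] (F : FusionData I)

theorem dual_involutive : Function.Involutive F.dual := F.dual_dual

theorem dual_eq_zero_iff {i : I} : F.dual i = F.zero ↔ i = F.zero := by
  rw [← F.dual_zero, F.dual_involutive.injective.eq_iff, F.dual_zero]

end FusionData

theorem trace_decomposition_general {I : Type*} [Fintype I] [DecidableEq I]
    (F : FusionData I)
    {A : Type*} [Ring A] [Algebra ℂ A] (b : Module.Basis I ℂ A)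
    (hb1 : b F.zero = 1)
    {S : Type*} [Fintype S] (V : S → Type*)
    [∀ s, AddCommGroup (V s)] [∀ s, Module ℂ (V s)]
    (ρ : ∀ s, A →ₐ[ℂ] Module.End ℂ (V s))
    -- the set of representations is complete: jointly they are faithful
    (hcomplete : Function.Injective fun a : A => fun s => ρ s a)
    (α : S → ℂ) (hα0 : ∀ s, α s ≠ 0)
    -- `z_{ρ s}` acts by the scalar `α s` on `V s`
    (hα : ∀ s, ρ s (∑ i, (LinearMap.trace ℂ (V s) (ρ s (b i))) • b (F.dual i))
            = α s • (1 : Module.End ℂ (V s)))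
    -- and by `0` on every non-isomorphic irreducible, i.e. on `V t` for `t ≠ s`
    (hz0 : ∀ s t, s ≠ t →
      ρ t (∑ i, (LinearMap.trace ℂ (V s) (ρ s (b i))) • b (F.dual i)) = 0)
    (a : A) :
    b.repr a F.zero = ∑ s, (α s)⁻¹ * LinearMap.trace ℂ (V s) (ρ s a) := by
  set χ : S → A →ₗ[ℂ] ℂ := fun s => LinearMap.trace ℂ (V s) ∘ₗ (ρ s).toLinearMap
  have hz1 : ∑ i, (∑ s, (α s)⁻¹ * χ s (b i)) • b (F.dual i) = 1 := by
    rw [← sum_inv_smul_eq_one_of_separating ρ hcomplete _ α hα0 hα hz0]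
    simp only [Finset.smul_sum, smul_smul, Finset.sum_smul]
    exact Finset.sum_comm
  have hcoeff : ∀ i, ∑ s, (α s)⁻¹ * χ s (b i) = b.repr (b F.zero) (F.dual i) := fun i => by
    rw [hb1, ← hz1, ← F.dual_involutive.coe_toPerm,
      b.repr_sum_smul_perm_apply F.dual_involutive.toPerm]
  have hτ : b.coord F.zero = ∑ s, (α s)⁻¹ • χ s := b.ext fun i => by
    simp only [Module.Basis.coord_apply, LinearMap.sum_apply, LinearMap.smul_apply, smul_eq_mul,
      hcoeff, Module.Basis.repr_self_apply, eq_comm (a := F.zero), F.dual_eq_zero_iff]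
  simpa [χ] using LinearMap.congr_fun hτ a

/-- If the complexified fusion ring `A` is semisimple with a complete set `{(V s, ρ s)}`
of pairwise non-isomorphic finite-dimensional irreducible representations, such that each
central element `z_{ρ s}` acts on `V s` by a nonzero scalar `α s` and by `0` on every `V t`
with `t ≠ s`, then `τ a = ∑ s, (α s)⁻¹ * Tr (ρ s a)` for all `a`. -/
theorem trace_decomposition {I : Type*} [Fintype I] [DecidableEq I]
    (F : FusionData I)
    {A : Type*} [Ring A] [Algebra ℂ A] [IsSemisimpleRing A] (b : Module.Basis I ℂ A)
    (hb1 : b F.zero = 1)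
    (hbmul : ∀ i j, b i * b j = ∑ m, (F.N i j m : ℂ) • b m)
    {S : Type*} [Fintype S] (V : S → Type*)
    [∀ s, AddCommGroup (V s)] [∀ s, Module ℂ (V s)]
    [∀ s, FiniteDimensional ℂ (V s)] [∀ s, Nontrivial (V s)]
    (ρ : ∀ s, A →ₐ[ℂ] Module.End ℂ (V s))
    -- each representation is irreducible
    (hirr : ∀ s, ∀ W : Submodule ℂ (V s), (∀ a : A, ∀ v ∈ W, ρ s a v ∈ W) → W = ⊥ ∨ W = ⊤)
    -- the representations are pairwise non-isomorphic
    (hnoniso : ∀ s t, s ≠ t →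
      ¬ ∃ e : V s ≃ₗ[ℂ] V t, ∀ (a : A) (v : V s), e (ρ s a v) = ρ t a (e v))
    -- the set of representations is complete: jointly they are faithful
    (hcomplete : Function.Injective fun a : A => fun s => ρ s a)
    (α : S → ℂ) (hα0 : ∀ s, α s ≠ 0)
    -- `z_{ρ s}` acts by the scalar `α s` on `V s`
    (hα : ∀ s, ρ s (∑ i, (LinearMap.trace ℂ (V s) (ρ s (b i))) • b (F.dual i))
            = α s • (1 : Module.End ℂ (V s)))
    -- and by `0` on every non-isomorphic irreducible, i.e. on `V t` for `t ≠ s`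
    (hz0 : ∀ s t, s ≠ t →
      ρ t (∑ i, (LinearMap.trace ℂ (V s) (ρ s (b i))) • b (F.dual i)) = 0)
    (a : A) :
    b.repr a F.zero = ∑ s, (α s)⁻¹ * LinearMap.trace ℂ (V s) (ρ s a) :=
  trace_decomposition_general F b hb1 V ρ hcomplete α hα0 hα hz0 a
end

section
/- Let ρ : A_ℂ → End(V) be a nonzero finite-dimensional unital representation of the complexified fusion ring A_ℂ on a complex inner product space V which is a *-representation, i.e. ρ(b_{i*}) = ρ(b_i)† (Hermitian adjoint) for all i ∈ I, and suppose z_ρ acts on V by a scalar α (ρ(z_ρ) = α·id_V). Then α is a real number and α > 0. -/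
open scoped BigOperators

/-!
Take the trace of `ρ(z_ρ) = α · id`. Since `ρ(b_{i*}) = ρ(b_i)†` has the conjugate
trace, the left side becomes `∑ᵢ |Tr ρ(b_i)|²`, which is at least `|Tr ρ(b_0)|² = (dim V)²`.
Hence `α · dim V` is a positive real number.
-/

open Module

theorem LinearMap.trace_adjoint {V : Type*} [NormedAddCommGroup V] [InnerProductSpace ℂ V]
    [FiniteDimensional ℂ V] (T : V →ₗ[ℂ] V) :
    trace ℂ V (adjoint T) = starRingEnd ℂ (trace ℂ V T) := by
  let v := stdOrthonormalBasis ℂ V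
  rw [trace_eq_matrix_trace ℂ v.toBasis, trace_eq_matrix_trace ℂ v.toBasis, toMatrix_adjoint,
    Matrix.trace_conjTranspose]
  rfl

section Representation

variable {ι A V : Type*} [Fintype ι] [Ring A] [Algebra ℂ A]
  [NormedAddCommGroup V] [InnerProductSpace ℂ V] [FiniteDimensional ℂ V]

theorem trace_sum_trace_smul_eq_sum_normSq (b : ι → A) (d : ι → ι)
    (ρ : A →ₗ[ℂ] End ℂ V) (hstar : ∀ i, ρ (b (d i)) = LinearMap.adjoint (ρ (b i))) :
    LinearMap.trace ℂ V (ρ (∑ i, LinearMap.trace ℂ V (ρ (b i)) • b (d i)))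
      = ((∑ i, Complex.normSq (LinearMap.trace ℂ V (ρ (b i))) : ℝ) : ℂ) := by
  simp only [map_sum, map_smul, smul_eq_mul, hstar, LinearMap.trace_adjoint, Complex.ofReal_sum,
    Complex.mul_conj]

theorem sum_normSq_trace_pos [Nontrivial V] (b : ι → A) {i₀ : ι} (hb : b i₀ = 1)
    (ρ : A →ₐ[ℂ] End ℂ V) :
    0 < ∑ i, Complex.normSq (LinearMap.trace ℂ V (ρ (b i))) := by
  have hdim : 0 < Complex.normSq (LinearMap.trace ℂ V (ρ (b i₀))) := by
    rw [hb, map_one, LinearMap.trace_one, Complex.normSq_pos, Nat.cast_ne_zero]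
    exact finrank_pos.ne'
  exact hdim.trans_le <|
    Finset.single_le_sum (f := fun i => Complex.normSq (LinearMap.trace ℂ V (ρ (b i))))
      (fun i _ => Complex.normSq_nonneg _) (Finset.mem_univ i₀)

end Representation

theorem Complex.im_eq_zero_and_re_pos_of_mul_natCast_eq_ofReal {α : ℂ} {n : ℕ} {S : ℝ}
    (hn : 0 < n) (hS : 0 < S) (h : α * n = S) : α.im = 0 ∧ 0 < α.re := by
  have hre := congrArg Complex.re h
  have him := congrArg Complex.im h
  simp only [Complex.mul_re, Complex.mul_im, Complex.natCast_re, Complex.natCast_im,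
    Complex.ofReal_re, Complex.ofReal_im, mul_zero, sub_zero, zero_add] at hre him
  have hn' : (0 : ℝ) < n := Nat.cast_pos.mpr hn
  exact ⟨(mul_eq_zero.mp him).resolve_right hn'.ne', pos_of_mul_pos_left (hre ▸ hS) hn'.le⟩

theorem formal_codegree_pos_general {I : Type*} [Fintype I] [DecidableEq I]
    (F : FusionData I)
    {A : Type*} [Ring A] [Algebra ℂ A] (b : Module.Basis I ℂ A)
    (hb1 : b F.zero = 1)
    {V : Type*} [NormedAddCommGroup V] [InnerProductSpace ℂ V]
    [FiniteDimensional ℂ V] [Nontrivial V]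
    (ρ : A →ₐ[ℂ] Module.End ℂ V)
    -- `ρ` is a *-representation: `ρ (b i*) = (ρ (b i))†`
    (hstar : ∀ i, ρ (b (F.dual i)) = LinearMap.adjoint (ρ (b i)))
    (α : ℂ)
    (hα : ρ (∑ i, (LinearMap.trace ℂ V (ρ (b i))) • b (F.dual i))
            = α • (1 : Module.End ℂ V)) :
    α.im = 0 ∧ 0 < α.re := by
  have htrace : α * finrank ℂ V
      = ((∑ i, Complex.normSq (LinearMap.trace ℂ V (ρ (b i))) : ℝ) : ℂ) := by
    rw [← smul_eq_mul, ← LinearMap.trace_one, ← map_smul, ← hα]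
    exact trace_sum_trace_smul_eq_sum_normSq b F.dual ρ.toLinearMap hstar
  exact Complex.im_eq_zero_and_re_pos_of_mul_natCast_eq_ofReal finrank_pos
    (sum_normSq_trace_pos b hb1 ρ) htrace

/-- For a nonzero finite-dimensional unital *-representation `ρ` of the complexified fusion
ring on a complex inner product space, on which `z_ρ` acts by the scalar `α`, the scalar
`α` is real and positive. -/
theorem formal_codegree_pos {I : Type*} [Fintype I] [DecidableEq I]
    (F : FusionData I)
    {A : Type*} [Ring A] [Algebra ℂ A] (b : Module.Basis I ℂ A)
    (hb1 : b F.zero = 1)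
    (hbmul : ∀ i j, b i * b j = ∑ m, (F.N i j m : ℂ) • b m)
    {V : Type*} [NormedAddCommGroup V] [InnerProductSpace ℂ V]
    [FiniteDimensional ℂ V] [Nontrivial V]
    (ρ : A →ₐ[ℂ] Module.End ℂ V)
    -- `ρ` is a *-representation: `ρ (b i*) = (ρ (b i))†`
    (hstar : ∀ i, ρ (b (F.dual i)) = LinearMap.adjoint (ρ (b i)))
    (α : ℂ)
    (hα : ρ (∑ i, (LinearMap.trace ℂ V (ρ (b i))) • b (F.dual i))
            = α • (1 : Module.End ℂ V)) :
    α.im = 0 ∧ 0 < α.re :=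
  formal_codegree_pos_general F b hb1 ρ hstar α hα
end

section
/- In the real fusion algebra A_ℝ := ℝ ⊗_ℤ A, the regular element R := Σ_{i∈I} d_i b_i satisfies b_j · R = d_j · R and R · b_j = d_j · R for every j ∈ I. Consequently, for every finite-dimensional *-representation ρ : A_ℂ → End(V) on a complex inner product space V (i.e. ρ(b_{i*}) = ρ(b_i)† for all i) and every v ∈ V, one has Σ_{i∈I} d_i · ⟨ρ(b_i)v, v⟩ ≥ 0 (the sum is a nonnegative real number). -/
/-!
The symmetries of `N` turn `d_i d_j = Σ_m N_{ijm} d_m` into `Σ_i N_{jim} d_i = d_j d_m` and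
`Σ_i N_{ijm} d_i = d_j d_m`, which say exactly that `R = Σ d_i b_i` is a left and right
eigenvector of every `b_j` with eigenvalue `d_j`. Hence `R² = D R` with `D = Σ d_i² > 0`.
Since duality permutes `I` and preserves `d`, `ρ(R)` is self-adjoint for a *-representation `ρ`,
so `ρ(R) = D⁻¹ ρ(R)† ρ(R)` is a positive operator and `Σ d_i ⟨ρ(b_i)v, v⟩ = ⟨ρ(R)v, v⟩ ≥ 0`.
-/

open scoped BigOperators

namespace FusionData

variable {I : Type*} [Fintype I] [DecidableEq I] (F : FusionData I)

theorem N_eq_N_dual_left (i j m : I) : F.N j i m = F.N (F.dual j) m i := by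
  rw [F.sym2, F.sym3 (F.dual m), F.dual_dual, F.dual_dual]

variable {F} {d : I → ℝ}

theorem IsFPdim.sum_N_mul_left (hd : F.IsFPdim d) (j m : I) :
    ∑ i, (F.N j i m : ℝ) * d i = d j * d m := by
  simp_rw [F.N_eq_N_dual_left _ j, ← hd.mul, hd.dual]

theorem IsFPdim.sum_N_mul_right (hd : F.IsFPdim d) (j m : I) :
    ∑ i, (F.N i j m : ℝ) * d i = d j * d m := by
  calc ∑ i, (F.N i j m : ℝ) * d i
      = ∑ i, (F.N j (F.dual m) (F.dual i) : ℝ) * d (F.dual (F.dual i)) := by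
        simp_rw [F.sym1 _ j, F.dual_dual]
    _ = ∑ i, (F.N j (F.dual m) i : ℝ) * d (F.dual i) :=
        F.dual_involutive.bijective.sum_comp fun i => (F.N j (F.dual m) i : ℝ) * d (F.dual i)
    _ = d j * d m := by simp_rw [hd.dual, ← hd.mul, hd.dual]

section Regular

variable {S A : Type*} [CommSemiring S] [Semiring A] [Algebra S A] {b : I → A} {c : I → S}

theorem mul_sum_smul_eq_smul (hbmul : ∀ i j, b i * b j = ∑ m, (F.N i j m : S) • b m)
    (hc : ∀ j m, ∑ i, (F.N j i m : S) * c i = c j * c m) (j : I) :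
    b j * ∑ i, c i • b i = c j • ∑ i, c i • b i := by
  simp_rw [Finset.mul_sum, mul_smul_comm, hbmul, Finset.smul_sum, smul_smul]
  rw [Finset.sum_comm]
  refine Finset.sum_congr rfl fun m _ => ?_
  rw [← Finset.sum_smul, ← hc]
  simp_rw [mul_comm (c _)]

theorem sum_smul_mul_eq_smul (hbmul : ∀ i j, b i * b j = ∑ m, (F.N i j m : S) • b m)
    (hc : ∀ j m, ∑ i, (F.N i j m : S) * c i = c j * c m) (j : I) :
    (∑ i, c i • b i) * b j = c j • ∑ i, c i • b i := by
  simp_rw [Finset.sum_mul, smul_mul_assoc, hbmul, Finset.smul_sum, smul_smul]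
  rw [Finset.sum_comm]
  refine Finset.sum_congr rfl fun m _ => ?_
  rw [← Finset.sum_smul, ← hc]
  simp_rw [mul_comm (c _)]

theorem sum_smul_mul_sum_smul (hbmul : ∀ i j, b i * b j = ∑ m, (F.N i j m : S) • b m)
    (hc : ∀ j m, ∑ i, (F.N j i m : S) * c i = c j * c m) :
    (∑ i, c i • b i) * (∑ i, c i • b i) = (∑ i, c i * c i) • ∑ i, c i • b i := by
  rw [Finset.sum_mul, Finset.sum_smul]
  simp_rw [smul_mul_assoc, mul_sum_smul_eq_smul hbmul hc, smul_smul]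

end Regular

end FusionData

namespace LinearMap

variable {𝕜 E : Type*} [RCLike 𝕜] [NormedAddCommGroup E] [InnerProductSpace 𝕜 E]
  [FiniteDimensional 𝕜 E]

theorem adjoint_sum_smul_eq_of_involutive {I : Type*} [Fintype I] {σ : I → I}
    (hσ : Function.Involutive σ) {T : I → E →ₗ[𝕜] E} (hT : ∀ i, T (σ i) = (T i).adjoint)
    {c : I → ℝ} (hc : ∀ i, c (σ i) = c i) :
    (∑ i, (c i : 𝕜) • T i).adjoint = ∑ i, (c i : 𝕜) • T i := by
  simp_rw [map_sum, map_smulₛₗ, RCLike.conj_ofReal, ← hT]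
  conv_lhs => enter [2, i]; rw [← hc i]
  exact hσ.bijective.sum_comp fun i => (c i : 𝕜) • T i

theorem isPositive_of_adjoint_eq_of_mul_self_eq_smul {T : E →ₗ[𝕜] E} (hT : T.adjoint = T)
    {D : ℝ} (hD : 0 < D) (hT2 : T * T = (D : 𝕜) • T) : T.IsPositive := by
  have : T = ((D⁻¹ : ℝ) : 𝕜) • (T.adjoint ∘ₗ T) := by
    rw [hT, ← Module.End.mul_eq_comp, hT2, smul_smul, ← RCLike.ofReal_mul,
      inv_mul_cancel₀ hD.ne', RCLike.ofReal_one, one_smul]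
  rw [this]
  exact (isPositive_adjoint_comp_self T).smul_of_nonneg
    (RCLike.ofReal_nonneg.mpr (inv_nonneg.mpr hD.le))

end LinearMap

open scoped ComplexOrder in
theorem regular_element_and_positivity_general {I : Type*} [Fintype I] [DecidableEq I]
    (F : FusionData I) (d : I → ℝ) (hd : F.IsFPdim d)
    -- the real fusion algebra `Aℝ = ℝ ⊗ A`
    {Aℝ : Type*} [Ring Aℝ] [Algebra ℝ Aℝ] (bR : Module.Basis I ℝ Aℝ)
    (hbRmul : ∀ i j, bR i * bR j = ∑ m, (F.N i j m : ℝ) • bR m)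
    -- the complexified fusion ring `A = ℂ ⊗ A`
    {A : Type*} [Ring A] [Algebra ℂ A] (b : Module.Basis I ℂ A)
    (hbmul : ∀ i j, b i * b j = ∑ m, (F.N i j m : ℂ) • b m)
    {V : Type*} [NormedAddCommGroup V] [InnerProductSpace ℂ V] [FiniteDimensional ℂ V]
    (ρ : A →ₐ[ℂ] Module.End ℂ V)
    -- `ρ` is a *-representation: `ρ (b i*) = (ρ (b i))†`
    (hstar : ∀ i, ρ (b (F.dual i)) = LinearMap.adjoint (ρ (b i)))
    (v : V) :
    (∀ j, bR j * (∑ i, d i • bR i) = d j • (∑ i, d i • bR i)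
        ∧ (∑ i, d i • bR i) * bR j = d j • (∑ i, d i • bR i))
    ∧ 0 ≤ ∑ i, (d i : ℂ) * (inner ℂ (ρ (b i) v) v : ℂ) := by
  have hdℂ : ∀ j m, ∑ i, (F.N j i m : ℂ) * (d i : ℂ) = d j * d m := fun j m => by
    exact_mod_cast hd.sum_N_mul_left j m
  refine ⟨fun j => ⟨F.mul_sum_smul_eq_smul hbRmul hd.sum_N_mul_left j,
    F.sum_smul_mul_eq_smul hbRmul hd.sum_N_mul_right j⟩, ?_⟩
  set R : A := ∑ i, (d i : ℂ) • b i
  have hρR : ρ R = ∑ i, (d i : ℂ) • ρ (b i) := by simp only [R, map_sum, map_smul]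
  have hR_self_adjoint : (ρ R).adjoint = ρ R := by
    rw [hρR]
    exact LinearMap.adjoint_sum_smul_eq_of_involutive F.dual_involutive hstar hd.dual
  have hRR : ρ R * ρ R = ((∑ i, d i * d i : ℝ) : ℂ) • ρ R := by
    rw [← map_mul, F.sum_smul_mul_sum_smul hbmul hdℂ, map_smul]
    push_cast
    rfl
  have hD : 0 < ∑ i, d i * d i :=
    Finset.sum_pos (fun i _ => mul_pos (hd.pos i) (hd.pos i)) ⟨F.zero, Finset.mem_univ _⟩
  have hpos := LinearMap.isPositive_of_adjoint_eq_of_mul_self_eq_smul hR_self_adjoint hD hRR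
  convert hpos.inner_nonneg_left v using 1
  simp only [hρR, LinearMap.sum_apply, LinearMap.smul_apply, sum_inner, inner_smul_left,
    Complex.conj_ofReal]

open scoped ComplexOrder in
/-- In the real fusion algebra `Aℝ`, the regular element `R = ∑ i, d i • bR i` satisfies
`bR j * R = d j • R` and `R * bR j = d j • R`; consequently, for every finite-dimensional
*-representation `ρ` of the complexified fusion ring on a complex inner product space and
every vector `v`, the sum `∑ i, d i * ⟨ρ (b i) v, v⟩` is a nonnegative real number. -/
theorem regular_element_and_positivity {I : Type*} [Fintype I] [DecidableEq I]
    (F : FusionData I) (d : I → ℝ) (hd : F.IsFPdim d)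
    -- the real fusion algebra `Aℝ = ℝ ⊗ A`
    {Aℝ : Type*} [Ring Aℝ] [Algebra ℝ Aℝ] (bR : Module.Basis I ℝ Aℝ)
    (hbR1 : bR F.zero = 1)
    (hbRmul : ∀ i j, bR i * bR j = ∑ m, (F.N i j m : ℝ) • bR m)
    -- the complexified fusion ring `A = ℂ ⊗ A`
    {A : Type*} [Ring A] [Algebra ℂ A] (b : Module.Basis I ℂ A)
    (hb1 : b F.zero = 1)
    (hbmul : ∀ i j, b i * b j = ∑ m, (F.N i j m : ℂ) • b m)
    {V : Type*} [NormedAddCommGroup V] [InnerProductSpace ℂ V] [FiniteDimensional ℂ V]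
    (ρ : A →ₐ[ℂ] Module.End ℂ V)
    -- `ρ` is a *-representation: `ρ (b i*) = (ρ (b i))†`
    (hstar : ∀ i, ρ (b (F.dual i)) = LinearMap.adjoint (ρ (b i)))
    (v : V) :
    (∀ j, bR j * (∑ i, d i • bR i) = d j • (∑ i, d i • bR i)
        ∧ (∑ i, d i • bR i) * bR j = d j • (∑ i, d i • bR i))
    ∧ 0 ≤ ∑ i, (d i : ℂ) * (inner ℂ (ρ (b i) v) v : ℂ) :=
  regular_element_and_positivity_general F d hd bR hbRmul b hbmul ρ hstar v
end

section
/- Let G be a finite group, n ≥ 1, and let C₁, …, C_n be conjugacy classes of G. Let S := {(g₁, …, g_n) ∈ C₁ × ⋯ × C_n : g₁g₂⋯g_n = 1}. Then for every i ∈ {1, …, n}, the cardinality |C_i| divides |S|. -/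
/-- Let `G` be a finite group, `n ≥ 1`, and `C 1, …, C n` conjugacy classes of `G`. Let
`S` be the set of tuples `(g 1, …, g n)` with `g k ∈ C k` and `g 1 * g 2 * ⋯ * g n = 1`.
Then `|C i|` divides `|S|` for every `i`. -/
theorem conjugacy_class_card_dvd_card_solutions
    {G : Type*} [Group G] [Fintype G] (n : ℕ) (hn : 1 ≤ n)
    (C : Fin n → Set G) (hC : ∀ k, ∃ g : G, C k = {h | IsConj g h}) (i : Fin n) :
    Nat.card (C i) ∣
      Nat.card {t : Fin n → G // (∀ k, t k ∈ C k) ∧ (List.ofFn t).prod = 1} := by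
  classical
  set S := {t : Fin n → G // (∀ k, t k ∈ C k) ∧ (List.ofFn t).prod = 1} with hS
  let f : S → C i := fun t => ⟨t.1 i, t.2.1 i⟩
  -- conjugation preserves S
  have conjS : ∀ (u : G) (t : S),
      (∀ k, (fun k => u * t.1 k * u⁻¹) k ∈ C k) ∧
        (List.ofFn (fun k => u * t.1 k * u⁻¹)).prod = 1 := by
    intro u t
    constructor
    · intro k
      obtain ⟨g, hg⟩ := hC k
      have h1 : IsConj g (t.1 k) := (Set.ext_iff.mp hg _).mp (t.2.1 k)
      have h2 : IsConj (t.1 k) (u * t.1 k * u⁻¹) := isConj_iff.mpr ⟨u, rfl⟩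
      exact (Set.ext_iff.mp hg _).mpr (h1.trans h2)
    · have heq : (fun k => u * t.1 k * u⁻¹) = (MulAut.conj u) ∘ t.1 := by
        funext k; simp [MulAut.conj, mul_assoc]
      rw [heq, ← List.map_ofFn, ← map_list_prod, t.2.2, map_one]
  -- all fibers of f have the same cardinality
  have key : ∀ c c' : C i, Nat.card {t : S // f t = c} = Nat.card {t : S // f t = c'} := by
    intro c c'
    obtain ⟨g, hg⟩ := hC i
    have hc : IsConj g c.1 := (Set.ext_iff.mp hg _).mp c.2
    have hc' : IsConj g c'.1 := (Set.ext_iff.mp hg _).mp c'.2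
    obtain ⟨u, huc⟩ := isConj_iff.mp (hc.symm.trans hc')
    refine Nat.card_congr ⟨fun t => ⟨⟨fun k => u * t.1.1 k * u⁻¹, conjS u t.1⟩, ?_⟩,
      fun t => ⟨⟨fun k => u⁻¹ * t.1.1 k * u⁻¹⁻¹, conjS u⁻¹ t.1⟩, ?_⟩, ?_, ?_⟩
    · have h := t.2
      simp only [f, Subtype.ext_iff] at h ⊢
      rw [h, huc]
    · have h := t.2
      simp only [f, Subtype.ext_iff] at h ⊢
      rw [h, ← huc]; group
    · intro t; ext k; simp; group
    · intro t; ext k; simp; group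
  -- conclude
  obtain ⟨g, hg⟩ := hC i
  have hne : (g : G) ∈ C i := by rw [hg]; exact IsConj.refl g
  let c₀ : C i := ⟨g, hne⟩
  have hcard : Nat.card S = Nat.card (C i) * Nat.card {t : S // f t = c₀} := by
    rw [Nat.card_congr (Equiv.sigmaFiberEquiv f).symm]
    simp only [Nat.card_eq_fintype_card]
    rw [Fintype.card_sigma]
    rw [Finset.sum_congr rfl
      (fun c _ => by simpa [Nat.card_eq_fintype_card] using key c c₀),
      Finset.sum_const, smul_eq_mul, Finset.card_univ]
  rw [hcard]
  exact Dvd.intro _ rfl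
end

section
/- Let A be a commutative fusion ring satisfying the split semisimplicity, *-character, and trace decomposition assumptions. Fix a character δ with δ(b_i) ≠ 0 for all i, set D := α_δ, D_ρ := D/α_ρ, λ_s(ρ,i) := D^s · D_ρ^{1−s} · ρ(b_i)/δ(b_i), I_n(ρ₁,…,ρ_n) := Σ_{i∈I} δ(b_i)^{2−n} ρ₁(b_i)⋯ρ_n(b_i), and J_{n,s}(ρ₁,…,ρ_n) := D^{(n−2)s} (D_{ρ₁}⋯D_{ρ_n})^{1−s} I_n(ρ₁,…,ρ_n), where s is a rational number with s ≥ 0. Then the following are equivalent: (a) λ_s(ρ,i) is an algebraic integer for every character ρ and every i ∈ I; (b) for every n ≥ 2 and all characters ρ₁, …, ρ_n of A_ℂ, the number J_{n,s}(ρ₁,…,ρ_n)/(D_{ρ₁}·D_{ρ₂})^{1−s} is an algebraic integer. -/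
/-!
Write `x_i = λ_s(ρ, i)`. Splitting off `D^s D_ρ^(1-s) / δ(b_i)` for each of the last `n - 2`
factors gives
`J_{n,s}(ρ₁, …, ρ_n) / (D_{ρ₁} D_{ρ₂})^(1-s) = ∑ i, ρ₁(b_i) ρ₂(b_i) ∏_{k ≥ 3} λ_s(ρ_k, i)`,
and character values of the `b_i` are algebraic integers, so (a) gives (b). Conversely, for
`ρ₁ = δ`, `ρ₂ = σ`, `ρ₃ = ⋯ = ρ_n = ρ`, (b) says that every moment `∑ i, δ(b_i) σ(b_i) x_i^m`
is an algebraic integer. As the characters span the dual space, `σ` can be chosen so that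
`U = ∑_{x_i = x_j} δ(b_i) σ(b_i) ≠ 0`; a Lagrange polynomial separating the value `x_j` from
the other `x_i` writes `U x_j^M` as a fixed combination of moments. All powers of `x_j` then
lie in a finitely generated `ℤ`-module (inside a number field, as every `x_i` is algebraic),
so `x_j` is integral.
-/
open scoped BigOperators

/-- The formal codegree `α_ρ = ∑ i, |ρ (b i)|²` of a character `ρ` of the complexified
fusion ring, given as a ℂ-algebra `A` with basis `b`. -/
noncomputable def formalCodegree {I : Type*} [Fintype I] {A : Type*} [CommRing A] [Algebra ℂ A]
    (b : Module.Basis I ℂ A) (ρ : A →ₐ[ℂ] ℂ) : ℝ :=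
  ∑ i, Complex.normSq (ρ (b i))

open Finset Polynomial

theorem isIntegral_of_forall_pow_mem {R A : Type*} [CommRing R] [IsNoetherianRing R] [Ring A]
    [Algebra R A] {F : Submodule R A} (hF : F.FG) {x : A} (hx : ∀ n : ℕ, x ^ n ∈ F) :
    IsIntegral R x := by
  have := isNoetherian_of_fg_of_noetherian F hF
  have hle : Subalgebra.toSubmodule (Algebra.adjoin R {x}) ≤ F := by
    rw [Algebra.adjoin_eq_span, ← Submonoid.powers_eq_closure, Submodule.span_le]
    rintro _ ⟨n, rfl⟩
    exact hx n
  have := isNoetherian_of_le hle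
  exact isIntegral_of_submodule_noetherian _ ‹_› x (Algebra.self_mem_adjoin_singleton R x)

theorem IntermediateField.exists_fg_forall_isIntegral_mem {L : Type*} [Field L] [CharZero L]
    (E : IntermediateField ℚ L) [FiniteDimensional ℚ E] :
    ∃ F : Submodule ℤ L, F.FG ∧ ∀ z ∈ E, IsIntegral ℤ z → z ∈ F := by
  have : NumberField E := ⟨⟩
  let φ : NumberField.RingOfIntegers E →ₗ[ℤ] L :=
    ((algebraMap E L).comp (algebraMap (NumberField.RingOfIntegers E) E)).toIntAlgHom.toLinearMap
  refine ⟨(⊤ : Submodule ℤ _).map φ, Module.Finite.fg_top.map φ, fun z hzE hz => ?_⟩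
  have hz' : IsIntegral ℤ (⟨z, hzE⟩ : E) :=
    (isIntegral_algebraMap_iff (algebraMap E L).injective).mp hz
  exact ⟨⟨⟨z, hzE⟩, hz'⟩, trivial, rfl⟩

section Moments

variable {L ι : Type*} [Field L] [Fintype ι]

theorem sum_mul_pow_mul_eval (u x : ι → L) (p : L[X]) (M : ℕ) :
    ∑ i, u i * x i ^ M * p.eval (x i)
      = ∑ k ∈ range (p.natDegree + 1), p.coeff k * ∑ i, u i * x i ^ (M + k) := by
  simp_rw [eval_eq_sum_range, Finset.mul_sum]
  rw [Finset.sum_comm]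
  refine Finset.sum_congr rfl fun k _ => Finset.sum_congr rfl fun i _ => ?_
  ring

theorem exists_sum_filter_mul_pow_eq [DecidableEq L] (u x : ι → L) (j : ι) :
    ∃ (d : ℕ) (c : ℕ → L), ∀ M : ℕ, (∑ i ∈ univ.filter (x · = x j), u i) * x j ^ M
      = ∑ k ∈ range d, c k * ∑ i, u i * x i ^ (M + k) := by
  set p : L[X] := Lagrange.basis (univ.image x) id (x j)
  have hp : ∀ i, p.eval (x i) = if x i = x j then 1 else 0 := by
    intro i
    split_ifs with h
    · rw [h]
      exact Lagrange.eval_basis_self (v := id) (Set.injOn_id _) (mem_image_of_mem x (mem_univ j))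
    · exact Lagrange.eval_basis_of_ne (v := id) (Ne.symm h) (mem_image_of_mem x (mem_univ i))
  refine ⟨p.natDegree + 1, p.coeff, fun M => ?_⟩
  rw [← sum_mul_pow_mul_eval, Finset.sum_mul, Finset.sum_filter]
  refine Finset.sum_congr rfl fun i _ => ?_
  rw [hp i]
  split_ifs with h
  · rw [h, mul_one]
  · rw [mul_zero]

theorem isIntegral_of_forall_isIntegral_moment [CharZero L] [DecidableEq L] {u x : ι → L}
    (hu : ∀ i, u i ∈ algebraicClosure ℚ L) (hx : ∀ i, x i ∈ algebraicClosure ℚ L) {j : ι}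
    (hU : ∑ i ∈ univ.filter (x · = x j), u i ≠ 0)
    (hmom : ∀ m : ℕ, IsIntegral ℤ (∑ i, u i * x i ^ m)) : IsIntegral ℤ (x j) := by
  obtain ⟨d, c, hc⟩ := exists_sum_filter_mul_pow_eq u x j
  set E := IntermediateField.adjoin ℚ (Set.range u ∪ Set.range x)
  have : FiniteDimensional ℚ E := IntermediateField.finiteDimensional_adjoin <| by
    rintro _ (⟨i, rfl⟩ | ⟨i, rfl⟩)
    exacts [hu i, hx i]
  obtain ⟨F, hF, hFmem⟩ := E.exists_fg_forall_isIntegral_mem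
  have huE : ∀ i, u i ∈ E := fun i => IntermediateField.subset_adjoin ℚ _ (Or.inl ⟨i, rfl⟩)
  have hxE : ∀ i, x i ∈ E := fun i => IntermediateField.subset_adjoin ℚ _ (Or.inr ⟨i, rfl⟩)
  have hmomF : ∀ m : ℕ, (∑ i, u i * x i ^ m) ∈ F := fun m =>
    hFmem _ (sum_mem fun i _ => mul_mem (huE i) (pow_mem (hxE i) m)) (hmom m)
  set C := (range d).image fun k => (∑ i ∈ univ.filter (x · = x j), u i)⁻¹ * c k
  refine isIntegral_of_forall_pow_mem ((Submodule.fg_span C.finite_toSet).mul hF) fun M => ?_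
  rw [← inv_mul_cancel_left₀ hU (x j ^ M), hc M, Finset.mul_sum]
  refine sum_mem fun k hk => ?_
  rw [← mul_assoc]
  exact Submodule.mul_mem_mul (Submodule.subset_span (mem_image_of_mem _ hk)) (hmomF _)

end Moments

theorem ofReal_rpow_ratCast_mem_algebraicClosure {x : ℝ} (hx : 0 < x)
    (hxa : (x : ℂ) ∈ algebraicClosure ℚ ℂ) (q : ℚ) :
    ((x ^ (q : ℝ) : ℝ) : ℂ) ∈ algebraicClosure ℚ ℂ := by
  have hpow : ((x ^ (q : ℝ) : ℝ) : ℂ) ^ q.den = (x : ℂ) ^ q.num := by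
    rw [← Complex.ofReal_pow, ← Real.rpow_natCast, ← Real.rpow_mul hx.le,
      ← Complex.ofReal_zpow, ← Real.rpow_intCast]
    congr 2
    exact_mod_cast Rat.mul_den_eq_num q
  rw [mem_algebraicClosure_iff] at hxa ⊢
  refine IsAlgebraic.of_pow q.den_pos ?_
  rw [hpow, ← mem_algebraicClosure_iff] at *
  exact zpow_mem hxa _

theorem rpow_mul_prod_rpow_eq_mul_prod {m : ℕ} {D : ℝ} (hD : 0 < D) {c : Fin (m + 2) → ℝ}
    (hc : ∀ k, 0 ≤ c k) (s : ℝ) :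
    D ^ ((((m + 2 : ℕ) : ℝ) - 2) * s) * (∏ k, c k) ^ (1 - s)
      = (c 0 * c 1) ^ (1 - s) * ∏ k : Fin m, D ^ s * c k.succ.succ ^ (1 - s) := by
  have hDm : D ^ ((((m + 2 : ℕ) : ℝ) - 2) * s) = (D ^ s) ^ m := by
    rw [← Real.rpow_natCast, ← Real.rpow_mul hD.le]
    congr 1
    push_cast
    ring
  have hprod : 0 ≤ ∏ k : Fin m, c k.succ.succ := prod_nonneg fun k _ => hc _
  rw [Fin.prod_univ_succ, Fin.prod_univ_succ, Fin.succ_zero_eq_one,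
    Real.mul_rpow (hc 0) (mul_nonneg (hc 1) hprod), Real.mul_rpow (hc 1) hprod,
    ← Real.finsetProd_rpow _ _ fun k _ => hc _, prod_mul_distrib, prod_const, card_univ,
    Fintype.card_fin, hDm, Real.mul_rpow (hc 0) (hc 1)]
  ring

section FusionRing

variable {I A : Type*} [Fintype I] [CommRing A] [Algebra ℂ A] (b : Module.Basis I ℂ A)

theorem formalCodegree_pos {i₀ : I} (hb : b i₀ = 1) (ρ : A →ₐ[ℂ] ℂ) :
    0 < formalCodegree b ρ :=
  Finset.sum_pos' (fun i _ => Complex.normSq_nonneg _)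
    ⟨i₀, mem_univ _, by rw [hb, map_one, map_one]; exact one_pos⟩

theorem isIntegral_apply_basis {N : I → I → I → ℕ} {i₀ : I} (hb : b i₀ = 1)
    (hbmul : ∀ i j, b i * b j = ∑ m, (N i j m : ℂ) • b m) (ρ : A →ₐ[ℂ] ℂ) (i : I) :
    IsIntegral ℤ (ρ (b i)) := by
  set P := Submodule.span ℤ (Set.range b)
  have hone : (1 : A) ∈ P := hb ▸ Submodule.subset_span ⟨i₀, rfl⟩
  have hmul : P * P ≤ P := by
    rw [Submodule.span_mul_span, Submodule.span_le]
    rintro _ ⟨_, ⟨i, rfl⟩, _, ⟨j, rfl⟩, rfl⟩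
    simp only [hbmul]
    refine sum_mem fun m _ => ?_
    rw [Nat.cast_smul_eq_nsmul]
    exact nsmul_mem (Submodule.subset_span (Set.mem_range_self m)) _
  let S := P.toSubalgebra hone fun x y hx hy => hmul (Submodule.mul_mem_mul hx hy)
  have hS : (Subalgebra.toSubmodule S).FG := Submodule.fg_span (Set.finite_range b)
  exact (IsIntegral.of_mem_of_fg S hS _ (Submodule.subset_span ⟨i, rfl⟩)).map
    (ρ.restrictScalars ℤ)

theorem isIntegral_formalCodegree {ρ : A →ₐ[ℂ] ℂ} (hρ : ∀ i, IsIntegral ℤ (ρ (b i)))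
    {dual : I → I} (hdual : ∀ i, ρ (b (dual i)) = starRingEnd ℂ (ρ (b i))) :
    IsIntegral ℤ ((formalCodegree b ρ : ℝ) : ℂ) := by
  have h : ((formalCodegree b ρ : ℝ) : ℂ) = ∑ i, ρ (b i) * ρ (b (dual i)) := by
    simp only [formalCodegree, Complex.ofReal_sum, hdual, Complex.mul_conj]
  rw [h]
  exact IsIntegral.sum _ fun i _ => (hρ i).mul (hρ (dual i))

/-- The paper's `λ_s(ρ, i)`. -/
noncomputable def lambdaValue (δ : A →ₐ[ℂ] ℂ) (s : ℝ) (ρ : A →ₐ[ℂ] ℂ) (i : I) : ℂ :=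
  ((formalCodegree b δ ^ s * (formalCodegree b δ / formalCodegree b ρ) ^ (1 - s) : ℝ) : ℂ) *
    ρ (b i) / δ (b i)

theorem lambdaValue_mem_algebraicClosure (hα : ∀ ρ, 0 < formalCodegree b ρ)
    (hαalg : ∀ ρ, ((formalCodegree b ρ : ℝ) : ℂ) ∈ algebraicClosure ℚ ℂ)
    (hρb : ∀ (ρ : A →ₐ[ℂ] ℂ) i, ρ (b i) ∈ algebraicClosure ℚ ℂ)
    (δ : A →ₐ[ℂ] ℂ) (s : ℚ) (ρ : A →ₐ[ℂ] ℂ) (i : I) :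
    lambdaValue b δ s ρ i ∈ algebraicClosure ℚ ℂ := by
  have hquot : ((formalCodegree b δ / formalCodegree b ρ : ℝ) : ℂ) ∈ algebraicClosure ℚ ℂ := by
    rw [Complex.ofReal_div]
    exact div_mem (hαalg δ) (hαalg ρ)
  have hscalar := mul_mem
    (ofReal_rpow_ratCast_mem_algebraicClosure (hα δ) (hαalg δ) s)
    (ofReal_rpow_ratCast_mem_algebraicClosure (div_pos (hα δ) (hα ρ)) hquot (1 - s))
  rw [← Complex.ofReal_mul, Rat.cast_sub, Rat.cast_one] at hscalar
  exact div_mem (mul_mem hscalar (hρb ρ i)) (hρb δ i)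

theorem J_div_eq_sum_mul_prod_lambdaValue (hα : ∀ ρ, 0 < formalCodegree b ρ)
    (δ : A →ₐ[ℂ] ℂ) (s : ℝ) (m : ℕ) (ρ : Fin (m + 2) → (A →ₐ[ℂ] ℂ)) :
    (((formalCodegree b δ ^ ((((m + 2 : ℕ) : ℝ) - 2) * s) *
        (∏ k, formalCodegree b δ / formalCodegree b (ρ k)) ^ (1 - s) : ℝ) : ℂ) *
      ∑ i, δ (b i) ^ ((2 : ℤ) - ((m + 2 : ℕ) : ℤ)) * ∏ k, ρ k (b i)) /
     ((((formalCodegree b δ / formalCodegree b (ρ 0)) *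
        (formalCodegree b δ / formalCodegree b (ρ 1))) ^ (1 - s) : ℝ) : ℂ)
    = ∑ i, ρ 0 (b i) * ρ 1 (b i) * ∏ k : Fin m, lambdaValue b δ s (ρ k.succ.succ) i := by
  have hc : ∀ k, 0 < formalCodegree b δ / formalCodegree b (ρ k) := fun k =>
    div_pos (hα δ) (hα (ρ k))
  have hterm : ∀ i, δ (b i) ^ ((2 : ℤ) - ((m + 2 : ℕ) : ℤ)) * ∏ k, ρ k (b i)
      = ρ 0 (b i) * ρ 1 (b i) * ∏ k : Fin m, ρ k.succ.succ (b i) / δ (b i) := by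
    intro i
    rw [Fin.prod_univ_succ, Fin.prod_univ_succ, Fin.succ_zero_eq_one, prod_div_distrib,
      prod_const, card_univ, Fintype.card_fin,
      show (2 : ℤ) - ((m + 2 : ℕ) : ℤ) = -(m : ℤ) by push_cast; ring, zpow_neg, zpow_natCast]
    ring
  have hne : ((((formalCodegree b δ / formalCodegree b (ρ 0)) *
      (formalCodegree b δ / formalCodegree b (ρ 1))) ^ (1 - s) : ℝ) : ℂ) ≠ 0 :=
    Complex.ofReal_ne_zero.mpr (Real.rpow_pos_of_pos (mul_pos (hc 0) (hc 1)) _).ne'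
  rw [rpow_mul_prod_rpow_eq_mul_prod (hα δ) (fun k => (hc k).le), Complex.ofReal_mul,
    mul_assoc, mul_div_cancel_left₀ _ hne, mul_sum]
  refine sum_congr rfl fun i _ => ?_
  rw [hterm, Complex.ofReal_prod, mul_left_comm, ← prod_mul_distrib]
  congr 1
  refine prod_congr rfl fun k _ => ?_
  rw [lambdaValue]
  ring

omit [Fintype I] in
theorem exists_algHom_sum_mul_apply_ne_zero
    (hspan : ⊤ ≤ Submodule.span ℂ
      (Set.range fun ρ : A →ₐ[ℂ] ℂ => (ρ.toLinearMap : A →ₗ[ℂ] ℂ)))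
    {c : I → ℂ} {T : Finset I} {j : I} (hj : j ∈ T) (hcj : c j ≠ 0) :
    ∃ σ : A →ₐ[ℂ] ℂ, ∑ i ∈ T, c i * σ (b i) ≠ 0 := by
  set a := ∑ i ∈ T, c i • b i
  have ha : a ≠ 0 := fun ha => hcj (linearIndependent_iff'.mp b.linearIndependent T c ha j hj)
  have hσa : ∀ σ : A →ₐ[ℂ] ℂ, σ a = ∑ i ∈ T, c i * σ (b i) := fun σ => by
    simp only [a, map_sum, map_smul, smul_eq_mul]
  simp only [← hσa]
  by_contra! h
  refine ha ((Module.forall_dual_apply_eq_zero_iff ℂ a).mp fun φ => ?_)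
  have hker : Submodule.span ℂ (Set.range fun ρ : A →ₐ[ℂ] ℂ => (ρ.toLinearMap : A →ₗ[ℂ] ℂ))
      ≤ LinearMap.ker (LinearMap.applyₗ a) := by
    rw [Submodule.span_le]
    rintro _ ⟨σ, rfl⟩
    exact h σ
  exact hker (hspan Submodule.mem_top)

end FusionRing

/-- For a commutative fusion ring (split semisimple, with *-characters and the trace
decomposition), a character `δ` with `δ (b i) ≠ 0`, `D := α_δ`, `D_ρ := D / α_ρ`,
`λ_s(ρ,i) := D^s D_ρ^(1-s) ρ(b i)/δ(b i)`,
`I_n(ρ₁,…,ρ_n) := ∑ i, δ(b i)^(2-n) ρ₁(b i)⋯ρ_n(b i)` and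
`J_{n,s} := D^((n-2)s) (D_{ρ₁}⋯D_{ρ_n})^(1-s) I_n`, and `s ≥ 0` rational, the following
are equivalent: (a) every `λ_s(ρ,i)` is an algebraic integer; (b) for every `n ≥ 2` and
all characters `ρ₁,…,ρ_n`, the number `J_{n,s}(ρ₁,…,ρ_n)/(D_{ρ₁} D_{ρ₂})^(1-s)` is an
algebraic integer. -/
theorem isaacs_iff_J_integral {I : Type*} [Fintype I] [DecidableEq I]
    (F : FusionData I)
    {A : Type*} [CommRing A] [Algebra ℂ A] (b : Module.Basis I ℂ A)
    (hb1 : b F.zero = 1)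
    (hbmul : ∀ i j, b i * b j = ∑ m, (F.N i j m : ℂ) • b m)
    -- split semisimplicity: the characters number `|I|` and form a basis of the dual space
    (hspan : ⊤ ≤ Submodule.span ℂ
      (Set.range fun ρ : A →ₐ[ℂ] ℂ => (ρ.toLinearMap : A →ₗ[ℂ] ℂ)))
    -- every character is a *-character
    (hstarchar : ∀ (ρ : A →ₐ[ℂ] ℂ) (i : I), ρ (b (F.dual i)) = starRingEnd ℂ (ρ (b i)))
    (δ : A →ₐ[ℂ] ℂ) (hδ : ∀ i, δ (b i) ≠ 0)
    (s : ℚ) :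
    (∀ (ρ : A →ₐ[ℂ] ℂ) (i : I),
      IsIntegral ℤ
        (((formalCodegree b δ ^ ((s : ℝ)) *
           (formalCodegree b δ / formalCodegree b ρ) ^ (1 - (s : ℝ)) : ℝ) : ℂ) *
          ρ (b i) / δ (b i)))
    ↔ (∀ (n : ℕ) (hn : 2 ≤ n) (ρ : Fin n → (A →ₐ[ℂ] ℂ)),
        IsIntegral ℤ
          ((((formalCodegree b δ ^ (((n : ℝ) - 2) * (s : ℝ)) *
              (∏ k, formalCodegree b δ / formalCodegree b (ρ k)) ^ (1 - (s : ℝ)) : ℝ) : ℂ) *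
            ∑ i, (δ (b i)) ^ ((2 : ℤ) - (n : ℤ)) * ∏ k, ρ k (b i)) /
           ((((formalCodegree b δ / formalCodegree b (ρ ⟨0, by omega⟩)) *
              (formalCodegree b δ / formalCodegree b (ρ ⟨1, by omega⟩))) ^
                (1 - (s : ℝ)) : ℝ) : ℂ))) := by
  classical
  have hα := formalCodegree_pos b hb1
  have hρb := isIntegral_apply_basis b hb1 hbmul
  have halg : ∀ {z : ℂ}, IsIntegral ℤ z → z ∈ algebraicClosure ℚ ℂ := fun hz =>
    mem_algebraicClosure_iff'.mpr hz.tower_top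
  have hlam := lambdaValue_mem_algebraicClosure b hα
    (fun ρ => halg (isIntegral_formalCodegree b (hρb ρ) (hstarchar ρ)))
    (fun ρ i => halg (hρb ρ i)) δ s
  constructor
  · intro hint n hn ρ
    obtain ⟨m, rfl⟩ := Nat.exists_eq_add_of_le' hn
    simp only [Fin.zero_eta, Fin.mk_one, J_div_eq_sum_mul_prod_lambdaValue b hα]
    exact IsIntegral.sum _ fun i _ =>
      ((hρb _ i).mul (hρb _ i)).mul (IsIntegral.prod _ fun k _ => hint _ i)
  · intro hJ ρ j
    have hj : j ∈ univ.filter (lambdaValue b δ s ρ · = lambdaValue b δ s ρ j) :=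
      mem_filter.mpr ⟨mem_univ j, rfl⟩
    obtain ⟨σ, hσ⟩ := exists_algHom_sum_mul_apply_ne_zero b hspan (c := fun i => δ (b i)) hj (hδ j)
    refine isIntegral_of_forall_isIntegral_moment (u := fun i => δ (b i) * σ (b i))
      (fun i => halg ((hρb δ i).mul (hρb σ i))) (hlam ρ) hσ fun m => ?_
    have hm := hJ (m + 2) (by omega) (Fin.cons δ (Fin.cons σ fun _ => ρ))
    simp only [Fin.zero_eta, Fin.mk_one] at hm
    rw [J_div_eq_sum_mul_prod_lambdaValue b hα] at hm
    simpa only [Fin.cons_zero, Fin.cons_one, Fin.cons_succ, prod_const, card_univ,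
      Fintype.card_fin] using hm
end

section
/- Let A be a commutative fusion ring satisfying the split semisimplicity, *-character, and trace decomposition assumptions, and fix a character δ with δ(b_i) ≠ 0 for all i. Define I_n(ρ₁,…,ρ_n) := Σ_{i∈I} δ(b_i)^{2−n} ρ₁(b_i)⋯ρ_n(b_i) for characters ρ₁,…,ρ_n. Then for every n ≥ 3 and all characters ρ₁, …, ρ_n of A_ℂ: I_n(ρ₁,…,ρ_n) = Σ_ρ α_ρ^{-1} · I_{n−1}(ρ₁,…,ρ_{n−2},ρ) · I₃(ρ̄, ρ_{n−1}, ρ_n), where the sum is over all characters ρ of A_ℂ and ρ̄ denotes the character with ρ̄(b_i) = conj(ρ(b_i)). -/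
open scoped BigOperators

/-!
Applying the trace decomposition to `b i * b j*`, whose trace is `N_{i j* 0} = [i = j]`, gives
the orthogonality relation `∑_σ α_σ⁻¹ σ(b i) σ(b j*) = [i = j]`.  Since `ρ̄(b j) = ρ(b j*)`
for a *-character, expanding the right-hand side of the recursion as a double sum over
`i, j` and summing over `σ` first collapses it to the diagonal `i = j`, where the powers
`δ(b i)^(1-m) · δ(b i)^(-1)` combine to `δ(b i)^(-m)`.
-/

namespace FusionData

variable {I : Type*} [Fintype I] [DecidableEq I] (F : FusionData I)

theorem dual_injective : Function.Injective F.dual :=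
  Function.LeftInverse.injective F.dual_dual

variable {A : Type*} [CommRing A] [Algebra ℂ A] {b : Module.Basis I ℂ A}

theorem repr_mul_dual_zero (hbmul : ∀ i j, b i * b j = ∑ m, (F.N i j m : ℂ) • b m) (i j : I) :
    b.repr (b i * b (F.dual j)) F.zero = if j = i then 1 else 0 := by
  rw [hbmul]
  simp only [map_sum, map_smul, Module.Basis.repr_self, Finsupp.coe_finsetSum,
    Finset.sum_apply, Finsupp.smul_apply, Finsupp.single_apply, smul_eq_mul, mul_ite, mul_one,
    mul_zero, Finset.sum_ite_eq', Finset.mem_univ, if_true, F.duality,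
    F.dual_injective.eq_iff, Nat.cast_ite, Nat.cast_one, Nat.cast_zero]

variable [Fintype (A →ₐ[ℂ] ℂ)]

theorem sum_codegree_inv_mul_char_mul_char_dual
    (hbmul : ∀ i j, b i * b j = ∑ m, (F.N i j m : ℂ) • b m)
    (htau : ∀ a : A, (b.repr a F.zero : ℂ)
      = ∑ ρ : A →ₐ[ℂ] ℂ, ((formalCodegree b ρ : ℝ) : ℂ)⁻¹ * ρ a)
    (i j : I) :
    ∑ σ : A →ₐ[ℂ] ℂ, ((formalCodegree b σ : ℝ) : ℂ)⁻¹ * (σ (b i) * σ (b (F.dual j)))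
      = if j = i then 1 else 0 := by
  simpa only [map_mul, F.repr_mul_dual_zero hbmul] using (htau (b i * b (F.dual j))).symm

theorem sum_codegree_inv_mul_sum_mul_sum_dual
    (hbmul : ∀ i j, b i * b j = ∑ m, (F.N i j m : ℂ) • b m)
    (htau : ∀ a : A, (b.repr a F.zero : ℂ)
      = ∑ ρ : A →ₐ[ℂ] ℂ, ((formalCodegree b ρ : ℝ) : ℂ)⁻¹ * ρ a)
    (f g : I → ℂ) :
    ∑ σ : A →ₐ[ℂ] ℂ, ((formalCodegree b σ : ℝ) : ℂ)⁻¹ *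
        (∑ i, f i * σ (b i)) * (∑ j, g j * σ (b (F.dual j)))
      = ∑ i, f i * g i := by
  calc _ = ∑ σ : A →ₐ[ℂ] ℂ, ∑ i, ∑ j,
          f i * g j * (((formalCodegree b σ : ℝ) : ℂ)⁻¹ * (σ (b i) * σ (b (F.dual j)))) := by
        refine Finset.sum_congr rfl fun σ _ => ?_
        rw [mul_assoc, Finset.sum_mul_sum, Finset.mul_sum]
        refine Finset.sum_congr rfl fun i _ => ?_
        rw [Finset.mul_sum]
        exact Finset.sum_congr rfl fun j _ => by ring
    _ = ∑ i, ∑ j, f i * g j * ∑ σ : A →ₐ[ℂ] ℂ,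
          ((formalCodegree b σ : ℝ) : ℂ)⁻¹ * (σ (b i) * σ (b (F.dual j))) := by
        simp only [Finset.mul_sum]
        rw [Finset.sum_comm]
        exact Finset.sum_congr rfl fun i _ => Finset.sum_comm
    _ = ∑ i, f i * g i := by
        simp only [F.sum_codegree_inv_mul_char_mul_char_dual hbmul htau, mul_ite, mul_one,
          mul_zero, Finset.sum_ite_eq', Finset.mem_univ, if_true]

end FusionData

theorem I_n_recursion_general {I : Type*} [Fintype I] [DecidableEq I]
    (F : FusionData I)
    {A : Type*} [CommRing A] [Algebra ℂ A] (b : Module.Basis I ℂ A)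
    (hbmul : ∀ i j, b i * b j = ∑ m, (F.N i j m : ℂ) • b m)
    [Fintype (A →ₐ[ℂ] ℂ)]
    -- every character is a *-character
    (hstarchar : ∀ (ρ : A →ₐ[ℂ] ℂ) (i : I), ρ (b (F.dual i)) = starRingEnd ℂ (ρ (b i)))
    -- the trace decomposition `τ(a) = ∑ ρ, α_ρ⁻¹ ρ(a)`
    (htau : ∀ a : A, (b.repr a F.zero : ℂ)
      = ∑ ρ : A →ₐ[ℂ] ℂ, ((formalCodegree b ρ : ℝ) : ℂ)⁻¹ * ρ a)
    (δ : A →ₐ[ℂ] ℂ) (hδ : ∀ i, δ (b i) ≠ 0)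
    -- `conjChar ρ` is the complex conjugate character `ρ̄`
    (conjChar : (A →ₐ[ℂ] ℂ) → (A →ₐ[ℂ] ℂ))
    (hconj : ∀ (ρ : A →ₐ[ℂ] ℂ) (i : I), conjChar ρ (b i) = starRingEnd ℂ (ρ (b i)))
    (m : ℕ) (ρ : Fin m → (A →ₐ[ℂ] ℂ)) (η₁ η₂ : A →ₐ[ℂ] ℂ) :
    ∑ i, (δ (b i)) ^ ((2 : ℤ) - ((m : ℤ) + 2)) * ((∏ k, ρ k (b i)) * η₁ (b i) * η₂ (b i))
      = ∑ σ : A →ₐ[ℂ] ℂ, ((formalCodegree b σ : ℝ) : ℂ)⁻¹ *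
          (∑ i, (δ (b i)) ^ ((2 : ℤ) - ((m : ℤ) + 1)) * ((∏ k, ρ k (b i)) * σ (b i))) *
          (∑ i, (δ (b i)) ^ (-1 : ℤ) *
            (conjChar σ (b i) * η₁ (b i) * η₂ (b i))) := by
  have hconj_dual (σ : A →ₐ[ℂ] ℂ) (j : I) : conjChar σ (b j) = σ (b (F.dual j)) := by
    rw [hconj, hstarchar]
  have hδpow (i : I) : δ (b i) ^ ((2 : ℤ) - ((m : ℤ) + 2))
      = δ (b i) ^ ((2 : ℤ) - ((m : ℤ) + 1)) * δ (b i) ^ (-1 : ℤ) := by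
    rw [← zpow_add₀ (hδ i)]; ring_nf
  set f : I → ℂ := fun i => δ (b i) ^ ((2 : ℤ) - ((m : ℤ) + 1)) * ∏ k, ρ k (b i)
  set g : I → ℂ := fun i => δ (b i) ^ (-1 : ℤ) * (η₁ (b i) * η₂ (b i))
  calc _ = ∑ i, f i * g i := Finset.sum_congr rfl fun i _ => by simp only [f, g, hδpow]; ring
    _ = _ := by
      rw [← F.sum_codegree_inv_mul_sum_mul_sum_dual hbmul htau f g]
      refine Finset.sum_congr rfl fun σ _ => ?_
      simp only [f, g, hconj_dual]
      congr 1
      · congr 1; exact Finset.sum_congr rfl fun i _ => by ring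
      · exact Finset.sum_congr rfl fun i _ => by ring

/-- The recursion `I_n(ρ₁,…,ρ_n) = ∑ ρ, α_ρ⁻¹ I_{n-1}(ρ₁,…,ρ_{n-2},ρ) I₃(ρ̄,ρ_{n-1},ρ_n)`
for `n ≥ 3`, where `I_n(ρ₁,…,ρ_n) := ∑ i, δ(b i)^(2-n) ρ₁(b i)⋯ρ_n(b i)`, the sum is over
all characters `ρ`, and `ρ̄` is the character with `ρ̄(b i) = conj (ρ (b i))`.  Here
`n = m + 2` with `m ≥ 1`, the first `n - 2` characters are `ρ : Fin m → _`, and the last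
two are `η₁, η₂`. -/
theorem I_n_recursion {I : Type*} [Fintype I] [DecidableEq I]
    (F : FusionData I)
    {A : Type*} [CommRing A] [Algebra ℂ A] (b : Module.Basis I ℂ A)
    (hb1 : b F.zero = 1)
    (hbmul : ∀ i j, b i * b j = ∑ m, (F.N i j m : ℂ) • b m)
    -- split semisimplicity: the characters number `|I|` and form a basis of the dual space
    [Fintype (A →ₐ[ℂ] ℂ)]
    (hcard : Fintype.card (A →ₐ[ℂ] ℂ) = Fintype.card I)
    (hind : LinearIndependent ℂ fun ρ : A →ₐ[ℂ] ℂ => (ρ.toLinearMap : A →ₗ[ℂ] ℂ))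
    (hspan : ⊤ ≤ Submodule.span ℂ
      (Set.range fun ρ : A →ₐ[ℂ] ℂ => (ρ.toLinearMap : A →ₗ[ℂ] ℂ)))
    -- every character is a *-character
    (hstarchar : ∀ (ρ : A →ₐ[ℂ] ℂ) (i : I), ρ (b (F.dual i)) = starRingEnd ℂ (ρ (b i)))
    -- the trace decomposition `τ(a) = ∑ ρ, α_ρ⁻¹ ρ(a)`
    (htau : ∀ a : A, (b.repr a F.zero : ℂ)
      = ∑ ρ : A →ₐ[ℂ] ℂ, ((formalCodegree b ρ : ℝ) : ℂ)⁻¹ * ρ a)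
    (δ : A →ₐ[ℂ] ℂ) (hδ : ∀ i, δ (b i) ≠ 0)
    -- `conjChar ρ` is the complex conjugate character `ρ̄`
    (conjChar : (A →ₐ[ℂ] ℂ) → (A →ₐ[ℂ] ℂ))
    (hconj : ∀ (ρ : A →ₐ[ℂ] ℂ) (i : I), conjChar ρ (b i) = starRingEnd ℂ (ρ (b i)))
    (m : ℕ) (hm : 1 ≤ m) (ρ : Fin m → (A →ₐ[ℂ] ℂ)) (η₁ η₂ : A →ₐ[ℂ] ℂ) :
    ∑ i, (δ (b i)) ^ ((2 : ℤ) - ((m : ℤ) + 2)) * ((∏ k, ρ k (b i)) * η₁ (b i) * η₂ (b i))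
      = ∑ σ : A →ₐ[ℂ] ℂ, ((formalCodegree b σ : ℝ) : ℂ)⁻¹ *
          (∑ i, (δ (b i)) ^ ((2 : ℤ) - ((m : ℤ) + 1)) * ((∏ k, ρ k (b i)) * σ (b i))) *
          (∑ i, (δ (b i)) ^ (-1 : ℤ) *
            (conjChar σ (b i) * η₁ (b i) * η₂ (b i))) :=
  I_n_recursion_general F b hbmul hstarchar htau δ hδ conjChar hconj m ρ η₁ η₂
end

section
/- Let A be a commutative fusion ring satisfying the split semisimplicity, *-character, and trace decomposition assumptions, and fix a character δ with δ(b_i) ≠ 0 for all i. Define I₃(ρ₁,ρ₂,ρ₃) := Σ_{i∈I} δ(b_i)^{-1} ρ₁(b_i) ρ₂(b_i) ρ₃(b_i) for characters ρ₁, ρ₂, ρ₃. Then the product on the complex vector space spanned by the characters of A_ℂ defined on basis elements by ρ₁ ∗ ρ₂ := Σ_ρ α_ρ^{-1} · I₃(ρ₁, ρ₂, ρ̄) · ρ (sum over all characters ρ, where ρ̄(b_i) = conj(ρ(b_i))) is commutative and associative; explicitly, I₃(ρ₁,ρ₂,σ) = I₃(ρ₂,ρ₁,σ) for all characters, and for all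 characters ρ₁, ρ₂, ρ₃, σ one has Σ_ρ α_ρ^{-1} I₃(ρ₁,ρ₂,ρ̄) I₃(ρ,ρ₃,σ) = Σ_ρ α_ρ^{-1} I₃(ρ₂,ρ₃,ρ̄) I₃(ρ₁,ρ,σ). -/
open scoped BigOperators

/-- `I₃(ρ₁,ρ₂,ρ₃) := ∑ i, δ(b i)⁻¹ ρ₁(b i) ρ₂(b i) ρ₃(b i)` for characters of the
complexified commutative fusion ring, relative to a fixed character `δ` nonvanishing on
the basis. -/
noncomputable def I₃ {I : Type*} [Fintype I] {A : Type*} [CommRing A] [Algebra ℂ A]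
    (b : Module.Basis I ℂ A) (δ ρ₁ ρ₂ ρ₃ : A →ₐ[ℂ] ℂ) : ℂ :=
  ∑ i, (δ (b i))⁻¹ * (ρ₁ (b i) * ρ₂ (b i) * ρ₃ (b i))

/-!
The trace decomposition `τ(a) = ∑ ρ, α_ρ⁻¹ ρ(a)`, applied to `a = b_{i*} b_j` whose trace is
`N_{i* j 0} = [i = j]`, gives the orthogonality relation `∑ ρ, α_ρ⁻¹ ρ̄(b_i) ρ(b_j) = [i = j]`
for the columns of the character table. Consequently
`∑ ρ, α_ρ⁻¹ I₃(ρ₁,ρ₂,ρ̄) I₃(ρ,ρ₃,σ) = ∑ i, δ(b_i)⁻² ρ₁(b_i) ρ₂(b_i) ρ₃(b_i) σ(b_i)`,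
which is symmetric in `ρ₁, ρ₂, ρ₃`; this is associativity.
-/

theorem Finset.sum_mul_sum_mul_sum_eq_of_orthogonal {ι κ R : Type*} [Fintype ι] [Fintype κ]
    [DecidableEq κ] [CommSemiring R] (w : ι → R) (x y : ι → κ → R)
    (horth : ∀ i j, ∑ ρ, w ρ * (x ρ i * y ρ j) = if i = j then 1 else 0) (u v : κ → R) :
    ∑ ρ, w ρ * ((∑ i, u i * x ρ i) * ∑ j, v j * y ρ j) = ∑ i, u i * v i :=
  calc ∑ ρ, w ρ * ((∑ i, u i * x ρ i) * ∑ j, v j * y ρ j)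
      = ∑ i, ∑ j, u i * v j * ∑ ρ, w ρ * (x ρ i * y ρ j) := by
        simp_rw [Finset.sum_mul_sum, Finset.mul_sum]
        exact Finset.sum_comm.trans <| Finset.sum_congr rfl fun i _ => Finset.sum_comm.trans <|
          Finset.sum_congr rfl fun j _ => Finset.sum_congr rfl fun ρ _ => by ring
    _ = ∑ i, u i * v i := by simp [horth]

section I₃

variable {I : Type*} [Fintype I] {A : Type*} [CommRing A] [Algebra ℂ A]
  (b : Module.Basis I ℂ A) (δ : A →ₐ[ℂ] ℂ)

theorem I₃_comm (ρ₁ ρ₂ ρ₃ : A →ₐ[ℂ] ℂ) : I₃ b δ ρ₁ ρ₂ ρ₃ = I₃ b δ ρ₂ ρ₁ ρ₃ :=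
  Finset.sum_congr rfl fun _ _ => by ring

theorem I₃_eq_sum_mul_right (ρ₁ ρ₂ ρ₃ : A →ₐ[ℂ] ℂ) :
    I₃ b δ ρ₁ ρ₂ ρ₃ = ∑ i, (δ (b i))⁻¹ * (ρ₁ (b i) * ρ₂ (b i)) * ρ₃ (b i) :=
  Finset.sum_congr rfl fun _ _ => by ring

theorem I₃_eq_sum_mul_left (ρ₁ ρ₂ ρ₃ : A →ₐ[ℂ] ℂ) :
    I₃ b δ ρ₁ ρ₂ ρ₃ = ∑ i, (δ (b i))⁻¹ * (ρ₂ (b i) * ρ₃ (b i)) * ρ₁ (b i) :=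
  Finset.sum_congr rfl fun _ _ => by ring

end I₃

namespace FusionData

variable {I : Type*} [Fintype I] [DecidableEq I] (F : FusionData I)
  {A : Type*} [CommRing A] [Algebra ℂ A] (b : Module.Basis I ℂ A)

theorem repr_dual_mul_zero (hbmul : ∀ i j, b i * b j = ∑ m, (F.N i j m : ℂ) • b m) (i j : I) :
    b.repr (b (F.dual i) * b j) F.zero = if i = j then 1 else 0 := by
  simp only [hbmul, map_sum, map_smul, Module.Basis.repr_self, Finset.sum_apply',
    Finsupp.smul_single, smul_eq_mul, mul_one, Finsupp.single_apply, Finset.sum_ite_eq',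
    Finset.mem_univ, if_true, F.duality, F.dual_dual, eq_comm]
  split_ifs <;> simp

variable [Fintype (A →ₐ[ℂ] ℂ)]

theorem char_orthogonality (hbmul : ∀ i j, b i * b j = ∑ m, (F.N i j m : ℂ) • b m)
    (hstarchar : ∀ (ρ : A →ₐ[ℂ] ℂ) (i : I), ρ (b (F.dual i)) = starRingEnd ℂ (ρ (b i)))
    (htau : ∀ a : A, (b.repr a F.zero : ℂ)
      = ∑ ρ : A →ₐ[ℂ] ℂ, ((formalCodegree b ρ : ℝ) : ℂ)⁻¹ * ρ a) (i j : I) :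
    ∑ ρ : A →ₐ[ℂ] ℂ, ((formalCodegree b ρ : ℝ) : ℂ)⁻¹ * (starRingEnd ℂ (ρ (b i)) * ρ (b j))
      = if i = j then 1 else 0 := by
  rw [← F.repr_dual_mul_zero b hbmul, htau]
  simp only [map_mul, hstarchar]

theorem sum_formalCodegree_inv_mul_I₃_conjChar_mul_I₃
    (hbmul : ∀ i j, b i * b j = ∑ m, (F.N i j m : ℂ) • b m)
    (hstarchar : ∀ (ρ : A →ₐ[ℂ] ℂ) (i : I), ρ (b (F.dual i)) = starRingEnd ℂ (ρ (b i)))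
    (htau : ∀ a : A, (b.repr a F.zero : ℂ)
      = ∑ ρ : A →ₐ[ℂ] ℂ, ((formalCodegree b ρ : ℝ) : ℂ)⁻¹ * ρ a)
    (δ : A →ₐ[ℂ] ℂ) (conjChar : (A →ₐ[ℂ] ℂ) → (A →ₐ[ℂ] ℂ))
    (hconj : ∀ (ρ : A →ₐ[ℂ] ℂ) (i : I), conjChar ρ (b i) = starRingEnd ℂ (ρ (b i)))
    (ρ₁ ρ₂ ρ₃ σ : A →ₐ[ℂ] ℂ) :
    ∑ ρ : A →ₐ[ℂ] ℂ, ((formalCodegree b ρ : ℝ) : ℂ)⁻¹ *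
        I₃ b δ ρ₁ ρ₂ (conjChar ρ) * I₃ b δ ρ ρ₃ σ
      = ∑ i, (δ (b i))⁻¹ * (ρ₁ (b i) * ρ₂ (b i)) * ((δ (b i))⁻¹ * (ρ₃ (b i) * σ (b i))) := by
  rw [← Finset.sum_mul_sum_mul_sum_eq_of_orthogonal _ _ _
    (F.char_orthogonality b hbmul hstarchar htau)]
  refine Finset.sum_congr rfl fun ρ _ => ?_
  rw [I₃_eq_sum_mul_right b δ ρ₁ ρ₂, I₃_eq_sum_mul_left b δ ρ ρ₃ σ, mul_assoc]
  simp only [hconj]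

end FusionData

theorem dual_fusion_product_comm_assoc_general {I : Type*} [Fintype I] [DecidableEq I]
    (F : FusionData I)
    {A : Type*} [CommRing A] [Algebra ℂ A] (b : Module.Basis I ℂ A)
    (hbmul : ∀ i j, b i * b j = ∑ m, (F.N i j m : ℂ) • b m)
    [Fintype (A →ₐ[ℂ] ℂ)]
    -- every character is a *-character
    (hstarchar : ∀ (ρ : A →ₐ[ℂ] ℂ) (i : I), ρ (b (F.dual i)) = starRingEnd ℂ (ρ (b i)))
    -- the trace decomposition `τ(a) = ∑ ρ, α_ρ⁻¹ ρ(a)`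
    (htau : ∀ a : A, (b.repr a F.zero : ℂ)
      = ∑ ρ : A →ₐ[ℂ] ℂ, ((formalCodegree b ρ : ℝ) : ℂ)⁻¹ * ρ a)
    (δ : A →ₐ[ℂ] ℂ)
    -- `conjChar ρ` is the complex conjugate character `ρ̄`
    (conjChar : (A →ₐ[ℂ] ℂ) → (A →ₐ[ℂ] ℂ))
    (hconj : ∀ (ρ : A →ₐ[ℂ] ℂ) (i : I), conjChar ρ (b i) = starRingEnd ℂ (ρ (b i))) :
    (∀ ρ₁ ρ₂ σ : A →ₐ[ℂ] ℂ, I₃ b δ ρ₁ ρ₂ σ = I₃ b δ ρ₂ ρ₁ σ)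
    ∧ ∀ ρ₁ ρ₂ ρ₃ σ : A →ₐ[ℂ] ℂ,
        (∑ ρ : A →ₐ[ℂ] ℂ, ((formalCodegree b ρ : ℝ) : ℂ)⁻¹ *
          I₃ b δ ρ₁ ρ₂ (conjChar ρ) * I₃ b δ ρ ρ₃ σ)
        = ∑ ρ : A →ₐ[ℂ] ℂ, ((formalCodegree b ρ : ℝ) : ℂ)⁻¹ *
            I₃ b δ ρ₂ ρ₃ (conjChar ρ) * I₃ b δ ρ₁ ρ σ := by
  refine ⟨I₃_comm b δ, fun ρ₁ ρ₂ ρ₃ σ => ?_⟩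
  simp only [I₃_comm b δ ρ₁ _ σ,
    F.sum_formalCodegree_inv_mul_I₃_conjChar_mul_I₃ b hbmul hstarchar htau δ conjChar hconj]
  exact Finset.sum_congr rfl fun _ _ => by ring

/-- The product `ρ₁ ∗ ρ₂ := ∑ ρ, α_ρ⁻¹ I₃(ρ₁,ρ₂,ρ̄) ρ` on the span of the characters is
commutative and associative; explicitly, `I₃(ρ₁,ρ₂,σ) = I₃(ρ₂,ρ₁,σ)` and
`∑ ρ, α_ρ⁻¹ I₃(ρ₁,ρ₂,ρ̄) I₃(ρ,ρ₃,σ) = ∑ ρ, α_ρ⁻¹ I₃(ρ₂,ρ₃,ρ̄) I₃(ρ₁,ρ,σ)`. -/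
theorem dual_fusion_product_comm_assoc {I : Type*} [Fintype I] [DecidableEq I]
    (F : FusionData I)
    {A : Type*} [CommRing A] [Algebra ℂ A] (b : Module.Basis I ℂ A)
    (hb1 : b F.zero = 1)
    (hbmul : ∀ i j, b i * b j = ∑ m, (F.N i j m : ℂ) • b m)
    -- split semisimplicity: the characters number `|I|` and form a basis of the dual space
    [Fintype (A →ₐ[ℂ] ℂ)]
    (hcard : Fintype.card (A →ₐ[ℂ] ℂ) = Fintype.card I)
    (hind : LinearIndependent ℂ fun ρ : A →ₐ[ℂ] ℂ => (ρ.toLinearMap : A →ₗ[ℂ] ℂ))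
    (hspan : ⊤ ≤ Submodule.span ℂ
      (Set.range fun ρ : A →ₐ[ℂ] ℂ => (ρ.toLinearMap : A →ₗ[ℂ] ℂ)))
    -- every character is a *-character
    (hstarchar : ∀ (ρ : A →ₐ[ℂ] ℂ) (i : I), ρ (b (F.dual i)) = starRingEnd ℂ (ρ (b i)))
    -- the trace decomposition `τ(a) = ∑ ρ, α_ρ⁻¹ ρ(a)`
    (htau : ∀ a : A, (b.repr a F.zero : ℂ)
      = ∑ ρ : A →ₐ[ℂ] ℂ, ((formalCodegree b ρ : ℝ) : ℂ)⁻¹ * ρ a)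
    (δ : A →ₐ[ℂ] ℂ) (hδ : ∀ i, δ (b i) ≠ 0)
    -- `conjChar ρ` is the complex conjugate character `ρ̄`
    (conjChar : (A →ₐ[ℂ] ℂ) → (A →ₐ[ℂ] ℂ))
    (hconj : ∀ (ρ : A →ₐ[ℂ] ℂ) (i : I), conjChar ρ (b i) = starRingEnd ℂ (ρ (b i))) :
    (∀ ρ₁ ρ₂ σ : A →ₐ[ℂ] ℂ, I₃ b δ ρ₁ ρ₂ σ = I₃ b δ ρ₂ ρ₁ σ)
    ∧ ∀ ρ₁ ρ₂ ρ₃ σ : A →ₐ[ℂ] ℂ,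
        (∑ ρ : A →ₐ[ℂ] ℂ, ((formalCodegree b ρ : ℝ) : ℂ)⁻¹ *
          I₃ b δ ρ₁ ρ₂ (conjChar ρ) * I₃ b δ ρ ρ₃ σ)
        = ∑ ρ : A →ₐ[ℂ] ℂ, ((formalCodegree b ρ : ℝ) : ℂ)⁻¹ *
            I₃ b δ ρ₂ ρ₃ (conjChar ρ) * I₃ b δ ρ₁ ρ σ :=
  dual_fusion_product_comm_assoc_general F b hbmul hstarchar htau δ conjChar hconj
end
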